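/- arXiv:2310.14754 — 6 statements merged into one kernel-verified Lean document; each statement's English description precedes it below -/
import Mathlib

section
/- Let q ∈ ℕ and let u_θ : ℝ → ℝ be of class C^{q+1}. Let Ω_k = (x_k − Δx_k/2, x_k + Δx_k/2) be a cell with center x_k and length Δx_k > 0. Then for every j ∈ {0,…,q} and every x ∈ Ω_k, |((x − x_k)^j/j!) u_θ(x) − Σ_{ℓ=j}^q (u_θ^{(ℓ−j)}(x_k)/((ℓ−j)! j!)) (x − x_k)^ℓ| ≤ (sup_{ξ∈Ω_k} |u_θ^{(q+1−j)}(ξ)| / (j! (q+1−j)!)) (Δx_k)^{q+1}. In other words, each element of the multiplicative enriched basis V_h^* = ((x−x_k)^j u_θ(x)/j!)_{0≤j≤q} differs on Ω_k from a polynomial of degree at most q in (x − x_k) by at most b_j (Δx_k)^{q+1}, with b_j = sup_{Ω_k}|u_θ^{(q+1−j)}| / (j!(q+1−j)!). -/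
open Set Finset

private lemma iterWithin_eq {f : ℝ → ℝ} {N : ℕ} (hf : ContDiff ℝ (N : ℕ) f) {s : Set ℝ}
    (hs : UniqueDiffOn ℝ s) {m : ℕ} (hm : m ≤ N) {x : ℝ} (hx : x ∈ s) :
    iteratedDerivWithin m f s x = iteratedDeriv m f x := by
  have h : HasFTaylorSeriesUpTo (N : ℕ∞) f (ftaylorSeries ℝ f) :=
    contDiff_iff_ftaylorSeries.mp hf
  have h2 := (h.hasFTaylorSeriesUpToOn s).eq_iteratedFDerivWithin_of_uniqueDiffOn
    (m := m) (by exact_mod_cast hm) hs hx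
  rw [iteratedDerivWithin_eq_iteratedFDerivWithin, iteratedDeriv_eq_iteratedFDeriv, ← h2]
  rfl

private lemma aux_right {f : ℝ → ℝ} {n : ℕ} (hf : ContDiff ℝ ((n + 1 : ℕ)) f)
    {x0 x M : ℝ} (hx : x0 < x)
    (hM : ∀ y ∈ Set.Ioo x0 x, |iteratedDeriv (n + 1) f y| ≤ M) :
    |f x - ∑ m ∈ Finset.range (n + 1),
        iteratedDeriv m f x0 / (Nat.factorial m : ℝ) * (x - x0) ^ m|
      ≤ M * (x - x0) ^ (n + 1) / (Nat.factorial (n + 1) : ℝ) := by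
  have hud : UniqueDiffOn ℝ (Set.Icc x0 x) := uniqueDiffOn_Icc hx
  have hfon : ContDiffOn ℝ (n : ℕ) f (Set.Icc x0 x) :=
    (hf.of_le (by exact_mod_cast Nat.le_succ n)).contDiffOn
  have hf' : DifferentiableOn ℝ (iteratedDerivWithin n f (Set.Icc x0 x)) (Set.Ioo x0 x) :=
    (hf.contDiffOn.differentiableOn_iteratedDerivWithin
      (by exact_mod_cast n.lt_succ_self) hud).mono Set.Ioo_subset_Icc_self
  obtain ⟨x', hx', heq⟩ := taylor_mean_remainder_lagrange hx.ne (by rwa [Set.uIcc_of_le hx.le])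
    (by rwa [Set.uIcc_of_le hx.le, Set.uIoo_of_le hx.le])
  rw [Set.uIoo_of_le hx.le] at hx'
  rw [Set.uIcc_of_le hx.le] at heq
  have hT : taylorWithinEval f n (Set.Icc x0 x) x0 x =
      ∑ m ∈ Finset.range (n + 1),
        iteratedDeriv m f x0 / (Nat.factorial m : ℝ) * (x - x0) ^ m := by
    rw [taylor_within_apply]
    refine Finset.sum_congr rfl fun k hk => ?_
    rw [iterWithin_eq hf hud (le_of_lt (Finset.mem_range.mp hk)) (Set.left_mem_Icc.mpr hx.le)]
    simp [smul_eq_mul]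
    ring
  rw [← hT, heq,
    iterWithin_eq hf hud le_rfl (Set.Ioo_subset_Icc_self hx')]
  rw [abs_div, abs_mul, abs_of_nonneg (pow_nonneg (by linarith [hx'.1, hx'.2] : (0:ℝ) ≤ x - x0) _),
    abs_of_nonneg (by positivity : (0:ℝ) ≤ ((n+1).factorial : ℝ))]
  have hxx : (0:ℝ) ≤ x - x0 := by linarith
  gcongr
  exact hM x' hx'

private lemma aux_left {f : ℝ → ℝ} {n : ℕ} (hf : ContDiff ℝ ((n + 1 : ℕ)) f)
    {x0 x M : ℝ} (hx : x < x0)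
    (hM : ∀ y ∈ Set.Ioo x x0, |iteratedDeriv (n + 1) f y| ≤ M) :
    |f x - ∑ m ∈ Finset.range (n + 1),
        iteratedDeriv m f x0 / (Nat.factorial m : ℝ) * (x - x0) ^ m|
      ≤ M * (x0 - x) ^ (n + 1) / (Nat.factorial (n + 1) : ℝ) := by
  set g : ℝ → ℝ := fun t => f (2 * x0 - t) with hg
  have hgeq : ∀ m t, iteratedDeriv m g t = (-1 : ℝ) ^ m * iteratedDeriv m f (2 * x0 - t) := by
    intro m t
    have h1 : g = fun t => (fun z => f (2 * x0 + z)) (-t) := by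
      funext t; simp [hg, sub_eq_add_neg]
    rw [h1, iteratedDeriv_comp_neg m (fun z => f (2 * x0 + z)) t,
      iteratedDeriv_comp_const_add]
    simp [smul_eq_mul, sub_eq_add_neg]
  have hgC : ContDiff ℝ ((n + 1 : ℕ)) g := by
    exact hf.comp ((contDiff_const.sub contDiff_id))
  have hlt : x0 < 2 * x0 - x := by linarith
  have hMg : ∀ y ∈ Set.Ioo x0 (2 * x0 - x), |iteratedDeriv (n + 1) g y| ≤ M := by
    intro y hy
    rw [hgeq, abs_mul, abs_pow, abs_neg, abs_one, one_pow, one_mul]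
    exact hM _ ⟨by linarith [hy.2], by linarith [hy.1]⟩
  have := aux_right hgC hlt hMg
  have hval : g (2 * x0 - x) = f x := by
    have h2 : 2 * x0 - (2 * x0 - x) = x := by ring
    simp only [hg]
    rw [h2]
  have hsum : ∑ m ∈ Finset.range (n + 1),
      iteratedDeriv m g x0 / (Nat.factorial m : ℝ) * (2 * x0 - x - x0) ^ m
      = ∑ m ∈ Finset.range (n + 1),
      iteratedDeriv m f x0 / (Nat.factorial m : ℝ) * (x - x0) ^ m := by
    refine Finset.sum_congr rfl fun m _ => ?_
    rw [hgeq]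
    have : (2 * x0 - x - x0 : ℝ) = -(x - x0) := by ring
    rw [this]
    have h2 : (2 * x0 - x0 : ℝ) = x0 := by ring
    rw [h2]
    rcases Nat.even_or_odd m with he | ho
    · rw [he.neg_pow, he.neg_pow]; ring
    · rw [ho.neg_pow, ho.neg_pow]; ring
  rw [hval, hsum] at this
  have h3 : (2 * x0 - x - x0 : ℝ) = x0 - x := by ring
  rw [h3] at this
  exact this

private lemma aux_both {f : ℝ → ℝ} {n : ℕ} (hf : ContDiff ℝ ((n + 1 : ℕ)) f)
    {x0 x M : ℝ} (hM : ∀ y ∈ Set.uIcc x0 x, |iteratedDeriv (n + 1) f y| ≤ M) (hM0 : 0 ≤ M) :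
    |f x - ∑ m ∈ Finset.range (n + 1),
        iteratedDeriv m f x0 / (Nat.factorial m : ℝ) * (x - x0) ^ m|
      ≤ M * |x - x0| ^ (n + 1) / (Nat.factorial (n + 1) : ℝ) := by
  rcases lt_trichotomy x0 x with h | h | h
  · have := aux_right hf h (fun y hy => hM y (by
      rw [Set.uIcc_of_le h.le]; exact Set.Ioo_subset_Icc_self hy))
    rwa [abs_of_nonneg (by linarith : (0:ℝ) ≤ x - x0)]
  · subst h
    have hz : ∑ m ∈ Finset.range (n + 1),
        iteratedDeriv m f x0 / (Nat.factorial m : ℝ) * (x0 - x0) ^ m = f x0 := by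
      rw [Finset.sum_eq_single 0 (fun b _ hb => by simp [zero_pow hb]) (by simp)]
      simp
    rw [hz]
    simp
  · have := aux_left hf h (fun y hy => hM y (by
      rw [Set.uIcc_of_ge h.le]; exact Set.Ioo_subset_Icc_self hy))
    rwa [abs_of_nonpos (by linarith : (x - x0 : ℝ) ≤ 0), neg_sub]

/-- Taylor expansion bound for the multiplicative enriched DG basis
`V_h^* = ((x-x_k)^j u_θ(x)/j!)_{0 ≤ j ≤ q}` on the cell `Ω_k = (x_k - Δx_k/2, x_k + Δx_k/2)`:
for every `j ∈ {0,…,q}` and every `x ∈ Ω_k`,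
`|(x-x_k)^j/j! · u_θ(x) - ∑_{ℓ=j}^q u_θ^{(ℓ-j)}(x_k)/((ℓ-j)! j!) (x-x_k)^ℓ|
  ≤ sup_{Ω_k}|u_θ^{(q+1-j)}| / (j! (q+1-j)!) · Δx_k^{q+1}`. -/
theorem multiplicative_enriched_basis_taylor_bound
    (q : ℕ) (uθ : ℝ → ℝ) (huθ : ContDiff ℝ (q + 1 : ℕ) uθ)
    (xk Δx : ℝ) (hΔx : 0 < Δx) :
    ∀ j ≤ q, ∀ x ∈ Set.Ioo (xk - Δx / 2) (xk + Δx / 2),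
      |(x - xk) ^ j / (Nat.factorial j : ℝ) * uθ x -
          ∑ ℓ ∈ Finset.Icc j q,
            iteratedDeriv (ℓ - j) uθ xk /
                ((Nat.factorial (ℓ - j) : ℝ) * (Nat.factorial j : ℝ)) * (x - xk) ^ ℓ| ≤
        sSup ((fun ξ => |iteratedDeriv (q + 1 - j) uθ ξ|) ''
              Set.Ioo (xk - Δx / 2) (xk + Δx / 2)) /
            ((Nat.factorial j : ℝ) * (Nat.factorial (q + 1 - j) : ℝ)) * Δx ^ (q + 1) := by
  intro j hj x hx
  set n := q - j with hn
  have hqn : q + 1 - j = n + 1 := by omega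
  set S := Set.Ioo (xk - Δx / 2) (xk + Δx / 2) with hS
  set M := sSup ((fun ξ => |iteratedDeriv (q + 1 - j) uθ ξ|) '' S) with hM
  have hxkS : xk ∈ S := by constructor <;> simp <;> linarith
  have hcont : Continuous fun ξ => |iteratedDeriv (q + 1 - j) uθ ξ| := by
    have := huθ.continuous_iteratedDeriv (q + 1 - j) (by exact_mod_cast Nat.sub_le _ _)
    exact this.abs
  have hbdd : BddAbove ((fun ξ => |iteratedDeriv (q + 1 - j) uθ ξ|) '' S) := by
    refine BddAbove.mono (Set.image_mono Set.Ioo_subset_Icc_self) ?_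
    exact (isCompact_Icc.image hcont).bddAbove
  have hub : ∀ ξ ∈ S, |iteratedDeriv (n + 1) uθ ξ| ≤ M := by
    intro ξ hξ
    rw [← hqn]
    exact le_csSup hbdd ⟨ξ, hξ, rfl⟩
  have hM0 : 0 ≤ M := le_trans (abs_nonneg _) (hub xk hxkS)
  have hfn : ContDiff ℝ ((n + 1 : ℕ)) uθ := huθ.of_le (by exact_mod_cast Nat.succ_le_succ (Nat.sub_le q j))
  have hsubset : Set.uIcc xk x ⊆ S := by
    have : S.OrdConnected := Set.ordConnected_Ioo
    exact this.uIcc_subset hxkS hx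
  have h1 := aux_both hfn (fun y hy => hub y (hsubset hy)) hM0
  -- rewrite LHS as product
  have hfac : ∑ ℓ ∈ Finset.Icc j q,
      iteratedDeriv (ℓ - j) uθ xk /
          ((Nat.factorial (ℓ - j) : ℝ) * (Nat.factorial j : ℝ)) * (x - xk) ^ ℓ
      = (x - xk) ^ j / (Nat.factorial j : ℝ) *
        ∑ m ∈ Finset.range (n + 1),
          iteratedDeriv m uθ xk / (Nat.factorial m : ℝ) * (x - xk) ^ m := by
    rw [← Finset.Ico_add_one_right_eq_Icc, Finset.sum_Ico_eq_sum_range, Finset.mul_sum]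
    have hq1 : q + 1 - j = n + 1 := hqn
    rw [hq1]
    refine Finset.sum_congr rfl fun i _ => ?_
    have h2 : j + i - j = i := by omega
    rw [h2, pow_add]
    ring
  have hkey : (x - xk) ^ j / (Nat.factorial j : ℝ) * uθ x -
      ∑ ℓ ∈ Finset.Icc j q,
        iteratedDeriv (ℓ - j) uθ xk /
            ((Nat.factorial (ℓ - j) : ℝ) * (Nat.factorial j : ℝ)) * (x - xk) ^ ℓ
      = (x - xk) ^ j / (Nat.factorial j : ℝ) *
        (uθ x - ∑ m ∈ Finset.range (n + 1),
          iteratedDeriv m uθ xk / (Nat.factorial m : ℝ) * (x - xk) ^ m) := by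
    rw [hfac]; ring
  rw [hkey, abs_mul, abs_div, abs_pow, abs_of_nonneg (by positivity : (0:ℝ) ≤ ((j.factorial : ℝ)))]
  have habs : |x - xk| ≤ Δx := by
    rw [abs_le]; constructor <;> [linarith [hx.1]; linarith [hx.2]]
  calc |x - xk| ^ j / (j.factorial : ℝ) *
        |uθ x - ∑ m ∈ Finset.range (n + 1),
          iteratedDeriv m uθ xk / (Nat.factorial m : ℝ) * (x - xk) ^ m|
      ≤ |x - xk| ^ j / (j.factorial : ℝ) *
        (M * |x - xk| ^ (n + 1) / (Nat.factorial (n + 1) : ℝ)) := by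
        gcongr
    _ = M / ((j.factorial : ℝ) * ((n + 1).factorial : ℝ)) * (|x - xk| ^ j * |x - xk| ^ (n + 1)) := by
        field_simp
    _ = M / ((j.factorial : ℝ) * ((n + 1).factorial : ℝ)) * |x - xk| ^ (q + 1) := by
        rw [← pow_add]; congr 2; omega
    _ ≤ M / ((j.factorial : ℝ) * ((n + 1).factorial : ℝ)) * Δx ^ (q + 1) := by
        gcongr
    _ = M / ((j.factorial : ℝ) * ((q + 1 - j).factorial : ℝ)) * Δx ^ (q + 1) := by
        rw [hqn]
end

section
/- Fix q ∈ ℕ and quasi-uniformity constants 0 < δ_− ≤ δ_+. There exists a constant C > 0 depending only on q, δ_− and δ_+ with the following property. Let Ω ⊂ ℝ be a bounded open interval partitioned into N pairwise disjoint cells Ω_k = (x_k − Δx_k/2, x_k + Δx_k/2), k = 1,…,N, and let Δx > 0 be such that δ_− Δx ≤ Δx_k ≤ δ_+ Δx for all k. Let m > 0 and let u_θ be of class C^{q+1} on the closure of Ω with u_θ(x)² > m² for all x ∈ Ω. Let P_h be the operator that on each cell Ω_k acts as the orthogonal projection of L²(Ω_k) onto the span of the functions x ↦ (x − x_k)^j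 u_θ(x)/j!, j = 0,…,q. Then for every u ∈ H^{q+1}(Ω), ‖u − P_h(u)‖_{L²(Ω)} ≤ C (1 + ‖u_θ²‖_{L∞(Ω)}/m²) |u/u_θ|_{H^{q+1}(Ω)} (Δx)^{q+1} ‖u_θ‖_{L∞(Ω)}. -/
open MeasureTheory

lemma L2mul {α : Type*} [MeasurableSpace α] {μ : Measure α} {f g : α → ℝ}
    (hf : MemLp f 2 μ) (hg : MemLp g 2 μ) : Integrable (fun x => f x * g x) μ := by
  refine Integrable.mono' ((hf.integrable_sq.add hg.integrable_sq).div_const 2)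
    (hf.aestronglyMeasurable.mul hg.aestronglyMeasurable) ?_
  filter_upwards with x
  simp only [Pi.add_apply]
  have : ‖f x * g x‖ = |f x| * |g x| := by rw [Real.norm_eq_abs, abs_mul]
  rw [this]
  nlinarith [sq_nonneg (|f x| - |g x|), sq_abs (f x), sq_abs (g x)]

lemma CS {α : Type*} [MeasurableSpace α] {μ : Measure α} {f g : α → ℝ}
    (hf : MemLp f 2 μ) (hg : MemLp g 2 μ) :
    ∫ x, |f x * g x| ∂μ ≤ Real.sqrt (∫ x, f x ^ 2 ∂μ) * Real.sqrt (∫ x, g x ^ 2 ∂μ) := by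
  have h2 : Real.HolderConjugate 2 2 := by constructor <;> norm_num
  have hof : (ENNReal.ofReal 2) = 2 := by norm_num
  have hfa : MemLp (fun x => |f x|) (ENNReal.ofReal 2) μ := by rw [hof]; exact hf.abs
  have hga : MemLp (fun x => |g x|) (ENNReal.ofReal 2) μ := by rw [hof]; exact hg.abs
  have H := integral_mul_le_Lp_mul_Lq_of_nonneg h2
    (ae_of_all μ fun x => abs_nonneg (f x))
    (ae_of_all μ fun x => abs_nonneg (g x)) hfa hga
  have e1 : ∫ x, |f x| * |g x| ∂μ = ∫ x, |f x * g x| ∂μ := by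
    congr 1; ext x; rw [abs_mul]
  have e2 : ∀ h : α → ℝ, ∫ x, |h x| ^ (2:ℝ) ∂μ = ∫ x, h x ^ 2 ∂μ := by
    intro h; congr 1; ext x
    rw [show (2:ℝ) = ((2:ℕ):ℝ) by norm_num, Real.rpow_natCast, sq_abs]
  rw [e1, e2 f, e2 g] at H
  calc ∫ x, |f x * g x| ∂μ ≤ (∫ x, f x ^ 2 ∂μ) ^ (1/(2:ℝ)) * (∫ x, g x ^ 2 ∂μ) ^ (1/(2:ℝ)) := H
    _ = _ := by rw [Real.sqrt_eq_rpow, Real.sqrt_eq_rpow]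

lemma taylor_remainder {f : ℝ → ℝ} {s : Set ℝ} (hs : IsOpen s) {x₀ x : ℝ}
    (h : Set.uIcc x₀ x ⊆ s) (n : ℕ) (hf : ContDiffOn ℝ (n + 1 : ℕ) f s) :
    f x - taylorWithinEval f n s x₀ x
      = ∫ t in x₀..x,
          (((n.factorial : ℝ))⁻¹ * (x - t) ^ n) * iteratedDerivWithin (n + 1) f s t := by
  have husd : UniqueDiffOn ℝ s := hs.uniqueDiffOn
  have hcont : ContinuousOn (iteratedDerivWithin (n + 1) f s) s :=
    hf.continuousOn_iteratedDerivWithin (by exact_mod_cast le_refl (n+1)) husd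
  have hder : ∀ t ∈ Set.uIcc x₀ x,
      HasDerivAt (fun y => taylorWithinEval f n s y x)
        ((((n.factorial : ℝ))⁻¹ * (x - t) ^ n) * iteratedDerivWithin (n + 1) f s t) t := by
    intro t ht
    have hts : t ∈ s := h ht
    have hdiff : DifferentiableWithinAt ℝ (iteratedDerivWithin n f s) s t := by
      have := hf.differentiableOn_iteratedDerivWithin (m := n)
        (by exact_mod_cast Nat.lt_succ_self n) husd
      exact this t hts
    have H := hasDerivWithinAt_taylorWithinEval (f := f) (x := x) (y := t) (n := n)
      (s := s) (s' := s) husd self_mem_nhdsWithin hts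
      (subset_refl s) (hf.of_le (by exact_mod_cast Nat.le_succ n)) hdiff
    have := H.hasDerivAt (hs.mem_nhds hts)
    simpa [smul_eq_mul] using this
  have hint : IntervalIntegrable
      (fun t => (((n.factorial : ℝ))⁻¹ * (x - t) ^ n) * iteratedDerivWithin (n + 1) f s t)
      volume x₀ x := by
    apply ContinuousOn.intervalIntegrable
    exact (Continuous.continuousOn (by continuity)).mul (hcont.mono h)
  have := intervalIntegral.integral_eq_sub_of_hasDerivAt hder hint
  rw [this, taylorWithinEval_self]

lemma quot_bound {a b m : ℝ} (hab : a < b) (hm : 0 < m) (q : ℕ) {uθ u : ℝ → ℝ}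
    (huθ : ContDiffOn ℝ (q + 1 : ℕ) uθ (Set.Icc a b))
    (hlow : ∀ x ∈ Set.Ioo a b, m ^ 2 < uθ x ^ 2)
    (hu : ContDiffOn ℝ (q + 1 : ℕ) u (Set.Ioo a b)) :
    ∃ K : ℝ, 0 < K ∧ ∀ x ∈ Set.Ioo a b,
      |iteratedDerivWithin (q + 1) (fun z => u z / uθ z) (Set.Ioo a b) x|
        ≤ K * ∑ i ∈ Finset.range (q + 2), |iteratedDerivWithin i u (Set.Ioo a b) x| := by
  -- lower bound on |uθ| on the open interval
  have hlow' : ∀ x ∈ Set.Ioo a b, m ≤ |uθ x| := by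
    intro x hx
    nlinarith [abs_nonneg (uθ x), sq_abs (uθ x), hlow x hx]
  -- extend to the closed interval by continuity
  have hlowIcc : ∀ x ∈ Set.Icc a b, m ≤ |uθ x| := by
    intro x hx
    have hxcl : x ∈ closure (Set.Ioo a b) := by
      rw [closure_Ioo hab.ne]; exact hx
    haveI : (nhdsWithin x (Set.Ioo a b)).NeBot :=
      mem_closure_iff_nhdsWithin_neBot.mp hxcl
    have ht : Filter.Tendsto (fun y => |uθ y|) (nhdsWithin x (Set.Ioo a b)) (nhds |uθ x|) := by
      have := (huθ.continuousOn.continuousWithinAt hx).mono Set.Ioo_subset_Icc_self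
      exact this.abs
    exact ge_of_tendsto ht (Filter.eventually_of_mem self_mem_nhdsWithin hlow')
  have hne : ∀ x ∈ Set.Icc a b, uθ x ≠ 0 := by
    intro x hx h0
    have := hlowIcc x hx
    rw [h0, abs_zero] at this; linarith
  set v : ℝ → ℝ := fun z => (uθ z)⁻¹ with hvdef
  have hv : ContDiffOn ℝ (q + 1 : ℕ) v (Set.Icc a b) := huθ.inv hne
  -- bounds on derivatives of v on Icc
  have hbd : ∀ i, i ≤ q + 1 → ∃ Ci : ℝ, ∀ x ∈ Set.Icc a b,
      |iteratedDerivWithin i v (Set.Icc a b) x| ≤ Ci := by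
    intro i hi
    have hc : ContinuousOn (iteratedDerivWithin i v (Set.Icc a b)) (Set.Icc a b) :=
      hv.continuousOn_iteratedDerivWithin (by exact_mod_cast hi) (uniqueDiffOn_Icc hab)
    obtain ⟨C, hC⟩ := isCompact_Icc.exists_bound_of_continuousOn hc
    exact ⟨C, fun x hx => by simpa [Real.norm_eq_abs] using hC x hx⟩
  classical
  set CB : ℕ → ℝ := fun i => if h : i ≤ q + 1 then (hbd i h).choose else 0 with hCB
  set K₁ : ℝ := ∑ i ∈ Finset.range (q + 2), |CB i| with hK₁
  have hK₁nn : 0 ≤ K₁ := Finset.sum_nonneg fun i _ => abs_nonneg _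
  have hCBle : ∀ i, i ≤ q + 1 → ∀ x ∈ Set.Icc a b,
      |iteratedDerivWithin i v (Set.Icc a b) x| ≤ K₁ := by
    intro i hi x hx
    have h1 : |iteratedDerivWithin i v (Set.Icc a b) x| ≤ CB i := by
      rw [hCB]; simp only [hi, dif_pos]; exact (hbd i hi).choose_spec x hx
    have h2 : CB i ≤ |CB i| := le_abs_self _
    have h3 : |CB i| ≤ K₁ := by
      rw [hK₁]
      exact Finset.single_le_sum (f := fun j => |CB j|) (fun j _ => abs_nonneg _)
        (Finset.mem_range.mpr (by omega))
    linarith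
  -- transfer derivative bounds from Icc to Ioo
  have htrans : ∀ i x, x ∈ Set.Ioo a b →
      iteratedDerivWithin i v (Set.Ioo a b) x = iteratedDerivWithin i v (Set.Icc a b) x := by
    intro i x hx
    have hI2 : Set.Icc a b ∩ Set.Ioo a b = Set.Ioo a b :=
      Set.inter_eq_self_of_subset_right Set.Ioo_subset_Icc_self
    rw [iteratedDerivWithin_eq_iteratedFDerivWithin, iteratedDerivWithin_eq_iteratedFDerivWithin,
      ← hI2, iteratedFDerivWithin_inter_open isOpen_Ioo hx]
  have hvIoo : ContDiffOn ℝ (q + 1 : ℕ) v (Set.Ioo a b) := hv.mono Set.Ioo_subset_Icc_self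
  refine ⟨2 ^ (q + 1) * (K₁ + 1), by positivity, ?_⟩
  intro x hx
  have hw : (fun z => u z / uθ z) = fun z => u z * v z := by
    funext z; rw [hvdef]; exact div_eq_mul_inv _ _
  rw [hw]
  have H := norm_iteratedFDerivWithin_mul_le (𝕜 := ℝ) (f := u) (g := v)
    (N := ((q + 1 : ℕ) : WithTop ℕ∞)) hu hvIoo isOpen_Ioo.uniqueDiffOn hx
    (n := q + 1) le_rfl
  have hnorm : ∀ (h : ℝ → ℝ) (i : ℕ),
      ‖iteratedFDerivWithin ℝ i h (Set.Ioo a b) x‖ =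
        |iteratedDerivWithin i h (Set.Ioo a b) x| := by
    intro h i
    rw [norm_iteratedFDerivWithin_eq_norm_iteratedDerivWithin, Real.norm_eq_abs]
  calc |iteratedDerivWithin (q + 1) (fun z => u z * v z) (Set.Ioo a b) x|
      = ‖iteratedFDerivWithin ℝ (q + 1) (fun y => u y * v y) (Set.Ioo a b) x‖ := by
        rw [hnorm]
    _ ≤ ∑ i ∈ Finset.range (q + 2), ((q + 1).choose i : ℝ) *
          ‖iteratedFDerivWithin ℝ i u (Set.Ioo a b) x‖ *
          ‖iteratedFDerivWithin ℝ (q + 1 - i) v (Set.Ioo a b) x‖ := H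
    _ ≤ ∑ i ∈ Finset.range (q + 2),
          (2 ^ (q + 1) * (K₁ + 1)) * |iteratedDerivWithin i u (Set.Ioo a b) x| := by
        apply Finset.sum_le_sum
        intro i hi
        rw [hnorm, hnorm]
        have hile : i ≤ q + 1 := by
          have := Finset.mem_range.mp hi; omega
        have hch : ((q + 1).choose i : ℝ) ≤ 2 ^ (q + 1) := by
          have h1 : (q + 1).choose i ≤ 2 ^ (q + 1) := by
            calc (q + 1).choose i ≤ ∑ j ∈ Finset.range (q + 2), (q + 1).choose j :=
                  Finset.single_le_sum (fun j _ => Nat.zero_le _) hi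
              _ = 2 ^ (q + 1) := Nat.sum_range_choose (q + 1)
          exact_mod_cast h1
        have hvb : |iteratedDerivWithin (q + 1 - i) v (Set.Ioo a b) x| ≤ K₁ + 1 := by
          rw [htrans _ x hx]
          have := hCBle (q + 1 - i) (by omega) x (Set.Ioo_subset_Icc_self hx)
          linarith
        have hub : (0:ℝ) ≤ |iteratedDerivWithin i u (Set.Ioo a b) x| := abs_nonneg _
        have vnn : (0:ℝ) ≤ |iteratedDerivWithin (q + 1 - i) v (Set.Ioo a b) x| := abs_nonneg _
        have t2 : ((q + 1).choose i : ℝ) * |iteratedDerivWithin i u (Set.Ioo a b) x| *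
            |iteratedDerivWithin (q + 1 - i) v (Set.Ioo a b) x| ≤
            2 ^ (q + 1) * |iteratedDerivWithin i u (Set.Ioo a b) x| *
            |iteratedDerivWithin (q + 1 - i) v (Set.Ioo a b) x| :=
          mul_le_mul_of_nonneg_right (mul_le_mul_of_nonneg_right hch hub) vnn
        have t3 : 2 ^ (q + 1) * |iteratedDerivWithin i u (Set.Ioo a b) x| *
            |iteratedDerivWithin (q + 1 - i) v (Set.Ioo a b) x| ≤
            2 ^ (q + 1) * |iteratedDerivWithin i u (Set.Ioo a b) x| * (K₁ + 1) :=
          mul_le_mul_of_nonneg_left hvb (by positivity)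
        exact t2.trans (t3.trans_eq (by ring))
    _ = (2 ^ (q + 1) * (K₁ + 1)) *
          ∑ i ∈ Finset.range (q + 2), |iteratedDerivWithin i u (Set.Ioo a b) x| := by
        rw [Finset.mul_sum]

lemma cell_bound {a b : ℝ} (q : ℕ) {uθ u Ph : ℝ → ℝ}
    (huθ : ContDiffOn ℝ (q + 1 : ℕ) uθ (Set.Icc a b))
    {w g : ℝ → ℝ} (hwdef : w = fun z => u z / uθ z)
    (hgdef : g = iteratedDerivWithin (q + 1) w (Set.Ioo a b))
    (hne : ∀ x ∈ Set.Ioo a b, uθ x ≠ 0)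
    (hw : ContDiffOn ℝ (q + 1 : ℕ) w (Set.Ioo a b))
    {S : ℝ} (hSb : ∀ x ∈ Set.Ioo a b, |uθ x| ≤ S)
    (huL2 : MemLp u 2 (volume.restrict (Set.Ioo a b)))
    (hgL2 : MemLp g 2 (volume.restrict (Set.Ioo a b)))
    {x₀ d : ℝ} (hd : 0 < d)
    (hsub : Set.Ioo (x₀ - d / 2) (x₀ + d / 2) ⊆ Set.Ioo a b)
    (c : Fin (q + 1) → ℝ)
    (hPh : ∀ x ∈ Set.Ioo (x₀ - d / 2) (x₀ + d / 2), Ph x =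
       ∑ j : Fin (q + 1), c j * ((x - x₀) ^ (j : ℕ) * uθ x / (Nat.factorial (j : ℕ) : ℝ)))
    (horth : ∀ j : Fin (q + 1), ∫ x in Set.Ioo (x₀ - d / 2) (x₀ + d / 2),
       (u x - Ph x) * ((x - x₀) ^ (j : ℕ) * uθ x / (Nat.factorial (j : ℕ) : ℝ)) = 0) :
    IntegrableOn (fun x => (u x - Ph x) ^ 2) (Set.Ioo (x₀ - d / 2) (x₀ + d / 2)) ∧
    ∫ x in Set.Ioo (x₀ - d / 2) (x₀ + d / 2), (u x - Ph x) ^ 2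
      ≤ S ^ 2 * d ^ (2 * (q + 1)) * ∫ x in Set.Ioo (x₀ - d / 2) (x₀ + d / 2), g x ^ 2 := by
  have hSnn : 0 ≤ S := by
    have hx₀ : x₀ ∈ Set.Ioo (x₀ - d / 2) (x₀ + d / 2) := by constructor <;> nlinarith
    exact le_trans (abs_nonneg _) (hSb x₀ (hsub hx₀))
  set lo := x₀ - d / 2 with hlo
  set hi := x₀ + d / 2 with hhi
  set cell : Set ℝ := Set.Ioo lo hi with hcell
  set μ : Measure ℝ := volume.restrict cell with hμ
  have hlh : lo < hi := by rw [hlo, hhi]; linarith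
  have hx₀ : x₀ ∈ cell := by constructor <;> [rw [hlo]; rw [hhi]] <;> linarith
  have hIccsub : Set.Icc lo hi ⊆ Set.Icc a b := by
    obtain ⟨h1, h2⟩ := (Set.Ioo_subset_Ioo_iff hlh).mp hsub
    exact Set.Icc_subset_Icc h1 h2
  haveI hfin : IsFiniteMeasure μ := by
    constructor
    rw [hμ, Measure.restrict_apply_univ, hcell, Real.volume_Ioo]
    exact ENNReal.ofReal_lt_top
  have hvol : (volume cell).toReal = d := by
    rw [hcell, Real.volume_Ioo, hhi, hlo, ENNReal.toReal_ofReal (by linarith)]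
    ring
  have hmono : μ ≤ volume.restrict (Set.Ioo a b) := Measure.restrict_mono hsub le_rfl
  -- basis functions are in L²
  have hφ : ∀ j : Fin (q + 1), MemLp
      (fun x => (x - x₀) ^ (j : ℕ) * uθ x / (Nat.factorial (j : ℕ) : ℝ)) 2 μ := by
    intro j
    have hcont : ContinuousOn
        (fun x => (x - x₀) ^ (j : ℕ) * uθ x / (Nat.factorial (j : ℕ) : ℝ)) (Set.Icc lo hi) := by
      have hp : Continuous fun x : ℝ => (x - x₀) ^ (j : ℕ) :=
        (continuous_id.sub continuous_const).pow _
      exact (hp.continuousOn.mul (huθ.continuousOn.mono hIccsub)).div_const _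
    obtain ⟨B, hB⟩ := isCompact_Icc.exists_bound_of_continuousOn hcont
    refine MemLp.of_bound ((hcont.mono Set.Ioo_subset_Icc_self).aestronglyMeasurable
      measurableSet_Ioo) B ?_
    filter_upwards [ae_restrict_mem measurableSet_Ioo] with x hx
    exact hB x (Set.Ioo_subset_Icc_self hx)
  have hspan : ∀ cf : Fin (q + 1) → ℝ, MemLp
      (fun x => ∑ j : Fin (q + 1),
        cf j * ((x - x₀) ^ (j : ℕ) * uθ x / (Nat.factorial (j : ℕ) : ℝ))) 2 μ := by
    intro cf
    exact memLp_finset_sum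
      (f := fun (j : Fin (q + 1)) (x : ℝ) =>
        cf j * ((x - x₀) ^ (j : ℕ) * uθ x / (Nat.factorial (j : ℕ) : ℝ)))
      Finset.univ (fun j _ => (hφ j).const_mul (cf j))
  have huc : MemLp u 2 μ := huL2.mono_measure hmono
  have hgc : MemLp g 2 μ := hgL2.mono_measure hmono
  have hPhL2 : MemLp Ph 2 μ := by
    refine (hspan c).ae_eq ?_
    filter_upwards [ae_restrict_mem measurableSet_Ioo] with x hx
    exact (hPh x hx).symm
  set wc : Fin (q + 1) → ℝ := fun j => iteratedDerivWithin (j : ℕ) w (Set.Ioo a b) x₀ with hwc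
  set v : ℝ → ℝ := fun x => uθ x * taylorWithinEval w q (Set.Ioo a b) x₀ x with hv
  have hvspan : ∀ x : ℝ, v x = ∑ j : Fin (q + 1),
      wc j * ((x - x₀) ^ (j : ℕ) * uθ x / (Nat.factorial (j : ℕ) : ℝ)) := by
    intro x
    rw [hv]
    simp only
    rw [taylor_within_apply, Finset.mul_sum]
    simp only [smul_eq_mul]
    rw [← Fin.sum_univ_eq_sum_range (fun i => uθ x *
        ((i.factorial : ℝ)⁻¹ * (x - x₀) ^ i * iteratedDerivWithin i w (Set.Ioo a b) x₀))]
    apply Finset.sum_congr rfl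
    intro j _
    simp only [hwc, smul_eq_mul]
    have hfne : ((Nat.factorial (j : ℕ) : ℝ)) ≠ 0 := Nat.cast_ne_zero.mpr (Nat.factorial_ne_zero _)
    field_simp
  have hvL2 : MemLp v 2 μ := (hspan wc).ae_eq (ae_of_all _ fun x => (hvspan x).symm)
  have hsub2 : MemLp (fun x => u x - Ph x) 2 μ := huc.sub hPhL2
  have horthv : ∫ x in cell, (u x - Ph x) * (Ph x - v x) = 0 := by
    have heq : Set.EqOn (fun x => (u x - Ph x) * (Ph x - v x))
        (fun x => ∑ j : Fin (q + 1), (c j - wc j) *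
          ((u x - Ph x) * ((x - x₀) ^ (j : ℕ) * uθ x / (Nat.factorial (j : ℕ) : ℝ)))) cell := by
      intro x hx
      simp only
      rw [hPh x hx, hvspan x, ← Finset.sum_sub_distrib, Finset.mul_sum]
      apply Finset.sum_congr rfl
      intro j _
      ring
    rw [setIntegral_congr_fun measurableSet_Ioo heq]
    rw [integral_finset_sum _ (fun j _ => ((L2mul hsub2 (hφ j)).const_mul _))]
    apply Finset.sum_eq_zero
    intro j _
    have hsm := integral_smul (μ := μ) (c j - wc j)
      (fun a => (u a - Ph a) * ((a - x₀) ^ (j : ℕ) * uθ a / (Nat.factorial (j : ℕ) : ℝ)))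
    simp only [smul_eq_mul] at hsm
    rw [hsm, horth j, mul_zero]
  have hsqA : Integrable (fun x => (u x - Ph x) ^ 2) μ := hsub2.integrable_sq
  have hsqB : Integrable (fun x => (Ph x - v x) ^ 2) μ := (hPhL2.sub hvL2).integrable_sq
  have hmul2 : Integrable (fun x => (u x - Ph x) * (Ph x - v x)) μ := L2mul hsub2 (hPhL2.sub hvL2)
  have hproj : ∫ x in cell, (u x - Ph x) ^ 2 ≤ ∫ x in cell, (u x - v x) ^ 2 := by
    have hexp : (fun x => (u x - v x) ^ 2)
        = fun x => ((u x - Ph x) ^ 2 + 2 * ((u x - Ph x) * (Ph x - v x))) + (Ph x - v x) ^ 2 := by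
      funext x; ring
    have h1 : ∫ x in cell, (u x - v x) ^ 2
        = (∫ x in cell, ((u x - Ph x) ^ 2 + 2 * ((u x - Ph x) * (Ph x - v x))))
          + ∫ x in cell, (Ph x - v x) ^ 2 := by
      rw [hexp]
      exact integral_add (hsqA.add (hmul2.const_mul 2)) hsqB
    have h2 : ∫ x in cell, ((u x - Ph x) ^ 2 + 2 * ((u x - Ph x) * (Ph x - v x)))
        = (∫ x in cell, (u x - Ph x) ^ 2)
          + 2 * ∫ x in cell, ((u x - Ph x) * (Ph x - v x)) := by
      rw [integral_add hsqA (hmul2.const_mul 2)]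
      congr 1
      have hsm := integral_smul (μ := μ) (2:ℝ) (fun x => (u x - Ph x) * (Ph x - v x))
      simp only [smul_eq_mul] at hsm
      exact hsm
    have h3 : 0 ≤ ∫ x in cell, (Ph x - v x) ^ 2 := integral_nonneg fun x => sq_nonneg _
    rw [h1, h2, horthv]
    linarith
  have hgm : AEStronglyMeasurable g μ := hgc.aestronglyMeasurable
  have hgabs_int : Integrable (fun x => |g x|) μ := (hgc.integrable (by norm_num)).abs
  set IG : ℝ := ∫ x in cell, |g x| with hIGdef
  have hIGnn : 0 ≤ IG := integral_nonneg fun x => abs_nonneg _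
  have hGnn : 0 ≤ ∫ x in cell, g x ^ 2 := integral_nonneg fun x => sq_nonneg _
  have hIGle : IG ≤ Real.sqrt d * Real.sqrt (∫ x in cell, g x ^ 2) := by
    have hone : MemLp (fun _ : ℝ => (1:ℝ)) 2 μ := memLp_const 1
    have hcs := CS hone hgc
    simp only [one_mul] at hcs
    have h1 : ∫ x, ((1:ℝ)) ^ 2 ∂μ = d := by
      simp only [one_pow]
      rw [integral_const, smul_eq_mul, mul_one, hμ, Measure.real, Measure.restrict_apply_univ, hvol]
    rw [h1] at hcs
    exact hcs
  have hTbound : ∀ x ∈ cell, |u x - v x| ≤ S * (d ^ q * IG) := by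
    intro x hx
    have hxs : x ∈ Set.Ioo a b := hsub hx
    have hx₀s : x₀ ∈ Set.Ioo a b := hsub hx₀
    have huIcc : Set.uIcc x₀ x ⊆ Set.Ioo a b := Set.ordConnected_Ioo.uIcc_subset hx₀s hxs
    have huv : u x - v x = uθ x * (w x - taylorWithinEval w q (Set.Ioo a b) x₀ x) := by
      have hwx : w x = u x / uθ x := by rw [hwdef]
      rw [hv]
      rw [hwx]
      field_simp [hne x hxs]
    rw [huv, abs_mul]
    have hrem := taylor_remainder isOpen_Ioo huIcc q hw
    rw [← hgdef] at hrem
    have habs : ∀ t ∈ cell, |(((q.factorial : ℝ))⁻¹ * (x - t) ^ q) * g t| ≤ d ^ q * |g t| := by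
      intro t ht
      rw [abs_mul, abs_mul]
      have h1 : |((q.factorial : ℝ))⁻¹| ≤ 1 := by
        rw [abs_of_pos (by positivity)]
        exact inv_le_one_of_one_le₀ (by exact_mod_cast q.factorial_pos)
      have h2 : |(x - t) ^ q| ≤ d ^ q := by
        rw [abs_pow]
        apply pow_le_pow_left₀ (abs_nonneg _)
        obtain ⟨hx1, hx2⟩ := hx
        obtain ⟨ht1, ht2⟩ := ht
        rw [hlo] at hx1 ht1
        rw [hhi] at hx2 ht2
        rw [abs_le]
        constructor <;> linarith
      have h3 : (0:ℝ) ≤ |g t| := abs_nonneg _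
      calc |((q.factorial : ℝ))⁻¹| * |(x - t) ^ q| * |g t|
          ≤ 1 * d ^ q * |g t| := by
            apply mul_le_mul_of_nonneg_right _ h3
            apply mul_le_mul h1 h2 (abs_nonneg _) zero_le_one
        _ = d ^ q * |g t| := by ring
    have hintg : IntegrableOn (fun t => |(((q.factorial : ℝ))⁻¹ * (x - t) ^ q) * g t|) cell := by
      have hp : Continuous fun t : ℝ => ((q.factorial : ℝ))⁻¹ * (x - t) ^ q :=
        continuous_const.mul ((continuous_const.sub continuous_id).pow q)
      have hppp : MemLp (fun t : ℝ => ((q.factorial : ℝ))⁻¹ * (x - t) ^ q) 2 μ := by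
        refine MemLp.of_bound hp.aestronglyMeasurable.restrict (d ^ q) ?_
        filter_upwards [ae_restrict_mem measurableSet_Ioo] with t ht
        have h2' : |(x - t) ^ q| ≤ d ^ q := by
          rw [abs_pow]
          apply pow_le_pow_left₀ (abs_nonneg _)
          obtain ⟨hx1, hx2⟩ := hx
          obtain ⟨ht1, ht2⟩ := ht
          rw [hlo] at hx1 ht1
          rw [hhi] at hx2 ht2
          rw [abs_le]
          constructor <;> linarith
        have h1' : |((q.factorial : ℝ))⁻¹| ≤ 1 := by
          rw [abs_of_pos (by positivity)]
          exact inv_le_one_of_one_le₀ (by exact_mod_cast q.factorial_pos)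
        rw [Real.norm_eq_abs, abs_mul]
        calc |((q.factorial : ℝ))⁻¹| * |(x - t) ^ q| ≤ 1 * (d ^ q) :=
            mul_le_mul h1' h2' (abs_nonneg _) zero_le_one
          _ = d ^ q := one_mul _
      exact (L2mul hppp hgc).abs
    have hR : |w x - taylorWithinEval w q (Set.Ioo a b) x₀ x| ≤ d ^ q * IG := by
      rw [hrem]
      have h1 : |∫ t in x₀..x, (((q.factorial : ℝ))⁻¹ * (x - t) ^ q) * g t|
          ≤ ∫ t in Set.uIoc x₀ x, |(((q.factorial : ℝ))⁻¹ * (x - t) ^ q) * g t| := by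
        have hni := intervalIntegral.norm_integral_le_integral_norm_uIoc
          (μ := volume) (f := fun t => (((q.factorial : ℝ))⁻¹ * (x - t) ^ q) * g t)
          (a := x₀) (b := x)
        simp only [Real.norm_eq_abs] at hni
        exact hni
      have hss : Set.uIoc x₀ x ⊆ cell :=
        Set.uIoc_subset_uIcc.trans (Set.ordConnected_Ioo.uIcc_subset hx₀ hx)
      have h2 : ∫ t in Set.uIoc x₀ x, |(((q.factorial : ℝ))⁻¹ * (x - t) ^ q) * g t|
          ≤ ∫ t in cell, |(((q.factorial : ℝ))⁻¹ * (x - t) ^ q) * g t| := by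
        apply setIntegral_mono_set hintg
        · filter_upwards with t; exact abs_nonneg _
        · exact HasSubset.Subset.eventuallyLE hss
      have h3 : ∫ t in cell, |(((q.factorial : ℝ))⁻¹ * (x - t) ^ q) * g t|
          ≤ ∫ t in cell, d ^ q * |g t| :=
        setIntegral_mono_on hintg (hgabs_int.const_mul (d ^ q)) measurableSet_Ioo habs
      have h4 : ∫ t in cell, d ^ q * |g t| = d ^ q * IG := by
        have hsm := integral_smul (μ := μ) (d ^ q) (fun t => |g t|)
        simp only [smul_eq_mul] at hsm
        exact hsm
      linarith
    exact mul_le_mul (hSb x hxs) hR (abs_nonneg _) hSnn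
  have huvL2 : MemLp (fun x => u x - v x) 2 μ := huc.sub hvL2
  have h1 : ∫ x in cell, (u x - v x) ^ 2 ≤ ∫ x in cell, ((S * (d ^ q * IG)) ^ 2 : ℝ) := by
    refine setIntegral_mono_on huvL2.integrable_sq (integrable_const _) measurableSet_Ioo ?_
    intro x hx
    obtain ⟨hl, hr⟩ := abs_le.mp (hTbound x hx)
    exact sq_le_sq' hl hr
  have h2 : ∫ x in cell, ((S * (d ^ q * IG)) ^ 2 : ℝ) = (S * (d ^ q * IG)) ^ 2 * d := by
    rw [setIntegral_const, Measure.real, hvol, smul_eq_mul]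
    ring
  have hfinal : ∫ x in cell, (u x - v x) ^ 2 ≤ (S * (d ^ q * IG)) ^ 2 * d := by
    rw [← h2]; exact h1
  have hIG2 : IG ^ 2 ≤ d * ∫ x in cell, g x ^ 2 := by
    have hmm := mul_le_mul hIGle hIGle hIGnn (by positivity)
    have h3 : Real.sqrt d * Real.sqrt (∫ x in cell, g x ^ 2)
        * (Real.sqrt d * Real.sqrt (∫ x in cell, g x ^ 2)) = d * ∫ x in cell, g x ^ 2 := by
      rw [show ∀ p r : ℝ, p * r * (p * r) = p * p * (r * r) from fun p r => by ring,
        Real.mul_self_sqrt hd.le, Real.mul_self_sqrt hGnn]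
    calc IG ^ 2 = IG * IG := pow_two IG
      _ ≤ _ := hmm.trans_eq h3
  have hlast : ∫ x in cell, (u x - Ph x) ^ 2
      ≤ S ^ 2 * d ^ (2 * (q + 1)) * ∫ x in cell, g x ^ 2 := by
    calc ∫ x in cell, (u x - Ph x) ^ 2
        ≤ (S * (d ^ q * IG)) ^ 2 * d := hproj.trans hfinal
      _ = S ^ 2 * (d ^ q) ^ 2 * d * IG ^ 2 := by ring
      _ ≤ S ^ 2 * (d ^ q) ^ 2 * d * (d * ∫ x in cell, g x ^ 2) :=
          mul_le_mul_of_nonneg_left hIG2 (by positivity)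
      _ = S ^ 2 * d ^ (2 * (q + 1)) * ∫ x in cell, g x ^ 2 := by ring
  exact ⟨hsqA, hlast⟩


/-- Global `L²` error estimate for the cellwise `L²` orthogonal projection `P_h` onto the
multiplicative enriched bases `V_h^*`.  The bounded interval `Ω = (a,b)` is partitioned into
`N` pairwise disjoint cells `Ω_k = (x_k - Δx_k/2, x_k + Δx_k/2)` that are quasi-uniform:
`δ₋ Δx ≤ Δx_k ≤ δ₊ Δx`.  On each cell, `P_h` is the `L²(Ω_k)` orthogonal projection onto
the span of `x ↦ (x-x_k)^j u_θ(x)/j!`, `j = 0,…,q`.  There is `C > 0`, depending only on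
`q`, `δ₋`, `δ₊`, such that
`‖u - P_h(u)‖_{L²(Ω)} ≤ C (1 + ‖u_θ²‖_{L^∞(Ω)}/m²) |u/u_θ|_{H^{q+1}(Ω)} Δx^{q+1}
  ‖u_θ‖_{L^∞(Ω)}`
whenever `u_θ ∈ C^{q+1}` on the closure of `Ω` with `u_θ² > m² > 0` and `u ∈ H^{q+1}(Ω)`. -/
theorem global_projection_L2_error (q : ℕ) (δm δp : ℝ) (hδm : 0 < δm) (hδmp : δm ≤ δp) :
    ∃ C : ℝ, 0 < C ∧
      ∀ (a b : ℝ), a < b →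
      ∀ (N : ℕ) (xc dk : Fin N → ℝ),
        (∀ k, 0 < dk k) →
        (∀ k, Set.Ioo (xc k - dk k / 2) (xc k + dk k / 2) ⊆ Set.Ioo a b) →
        (∀ k l, k ≠ l →
          Disjoint (Set.Ioo (xc k - dk k / 2) (xc k + dk k / 2))
            (Set.Ioo (xc l - dk l / 2) (xc l + dk l / 2))) →
        (Set.Ioo a b ⊆ ⋃ k, Set.Icc (xc k - dk k / 2) (xc k + dk k / 2)) →
      ∀ Δx : ℝ, 0 < Δx →
        (∀ k, δm * Δx ≤ dk k ∧ dk k ≤ δp * Δx) →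
      ∀ (m : ℝ), 0 < m →
      ∀ uθ : ℝ → ℝ,
        ContDiffOn ℝ (q + 1 : ℕ) uθ (Set.Icc a b) →
        (∀ x ∈ Set.Ioo a b, m ^ 2 < uθ x ^ 2) →
      ∀ u : ℝ → ℝ,
        ContDiffOn ℝ (q + 1 : ℕ) u (Set.Ioo a b) →
        (∀ j ≤ q + 1,
          IntegrableOn (fun x => (iteratedDerivWithin j u (Set.Ioo a b) x) ^ 2) (Set.Ioo a b)) →
      ∀ Ph : ℝ → ℝ,
        (∀ k, ∃ c : Fin (q + 1) → ℝ,
          ∀ x ∈ Set.Ioo (xc k - dk k / 2) (xc k + dk k / 2), Ph x =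
            ∑ j : Fin (q + 1), c j *
              ((x - xc k) ^ (j : ℕ) * uθ x / (Nat.factorial (j : ℕ) : ℝ))) →
        (∀ k, ∀ j : Fin (q + 1),
          ∫ x in Set.Ioo (xc k - dk k / 2) (xc k + dk k / 2),
            (u x - Ph x) * ((x - xc k) ^ (j : ℕ) * uθ x / (Nat.factorial (j : ℕ) : ℝ)) = 0) →
      Real.sqrt (∫ x in Set.Ioo a b, (u x - Ph x) ^ 2) ≤
        C * (1 + sSup ((fun y => |uθ y ^ 2|) '' Set.Ioo a b) / m ^ 2) *
          Real.sqrt (∫ x in Set.Ioo a b,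
            (iteratedDerivWithin (q + 1) (fun z => u z / uθ z) (Set.Ioo a b) x) ^ 2) *
          Δx ^ (q + 1) *
          sSup ((fun y => |uθ y|) '' Set.Ioo a b) := by
  classical
  have hδp : 0 < δp := lt_of_lt_of_le hδm hδmp
  refine ⟨δp ^ (q + 1), by positivity, ?_⟩
  intro a b hab N xc dk hdk hsub hdisj hcover Δx hΔx hquasi m hm uθ huθ hlow u hu huint Ph hPh horth
  have hne : ∀ x ∈ Set.Ioo a b, uθ x ≠ 0 := by
    intro x hx h0
    have h := hlow x hx
    rw [h0] at h
    nlinarith [sq_nonneg m]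
  set w : ℝ → ℝ := fun z => u z / uθ z with hwdef
  set g : ℝ → ℝ := iteratedDerivWithin (q + 1) w (Set.Ioo a b) with hgdef
  have hwcd : ContDiffOn ℝ (q + 1 : ℕ) w (Set.Ioo a b) :=
    hu.div (huθ.mono Set.Ioo_subset_Icc_self) hne
  obtain ⟨Mθ, hMθ⟩ := isCompact_Icc.exists_bound_of_continuousOn huθ.continuousOn
  have hmid : (a + b) / 2 ∈ Set.Ioo a b := ⟨by linarith, by linarith⟩
  set S := sSup ((fun y => |uθ y|) '' Set.Ioo a b) with hS
  set X := sSup ((fun y => |uθ y ^ 2|) '' Set.Ioo a b) with hX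
  have hbddS : BddAbove ((fun y => |uθ y|) '' Set.Ioo a b) := by
    refine ⟨Mθ, ?_⟩
    rintro r ⟨y, hy, rfl⟩
    simpa [Real.norm_eq_abs] using hMθ y (Set.Ioo_subset_Icc_self hy)
  have hSb : ∀ x ∈ Set.Ioo a b, |uθ x| ≤ S := fun x hx => le_csSup hbddS ⟨x, hx, rfl⟩
  have hSnn : 0 ≤ S := le_trans (abs_nonneg _) (hSb _ hmid)
  have hbddX : BddAbove ((fun y => |uθ y ^ 2|) '' Set.Ioo a b) := by
    refine ⟨Mθ ^ 2, ?_⟩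
    rintro r ⟨y, hy, rfl⟩
    have h := hMθ y (Set.Ioo_subset_Icc_self hy)
    rw [Real.norm_eq_abs] at h
    simp only [abs_pow]
    have := abs_nonneg (uθ y)
    nlinarith
  have hXnn : 0 ≤ X := le_trans (abs_nonneg _) (le_csSup hbddX ⟨_, hmid, rfl⟩)
  have hX1 : 1 ≤ 1 + X / m ^ 2 := by
    have : 0 ≤ X / m ^ 2 := div_nonneg hXnn (sq_nonneg m)
    linarith
  have hgcont : ContinuousOn g (Set.Ioo a b) := by
    rw [hgdef]
    exact hwcd.continuousOn_iteratedDerivWithin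
      (by exact_mod_cast le_refl (q + 1)) isOpen_Ioo.uniqueDiffOn
  have hgm : AEStronglyMeasurable g (volume.restrict (Set.Ioo a b)) :=
    hgcont.aestronglyMeasurable measurableSet_Ioo
  obtain ⟨K, hK0, hKb⟩ := quot_bound hab hm q huθ hlow hu
  rw [← hwdef, ← hgdef] at hKb
  have hg2 : IntegrableOn (fun x => g x ^ 2) (Set.Ioo a b) := by
    refine Integrable.mono'
      (g := fun x => K ^ 2 * ((q + 2 : ℝ) *
        ∑ i ∈ Finset.range (q + 2), (iteratedDerivWithin i u (Set.Ioo a b) x) ^ 2)) ?_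
      ((hgcont.pow 2).aestronglyMeasurable measurableSet_Ioo) ?_
    · apply Integrable.const_mul
      apply Integrable.const_mul
      apply integrable_finset_sum
      intro i hi
      exact huint i (by have := Finset.mem_range.mp hi; omega)
    · filter_upwards [ae_restrict_mem measurableSet_Ioo] with x hx
      have h := hKb x hx
      have hsumnn : 0 ≤ ∑ i ∈ Finset.range (q + 2), |iteratedDerivWithin i u (Set.Ioo a b) x| :=
        Finset.sum_nonneg fun i _ => abs_nonneg _
      have e1 : g x ^ 2 ≤ (K * ∑ i ∈ Finset.range (q + 2),
          |iteratedDerivWithin i u (Set.Ioo a b) x|) ^ 2 := by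
        nlinarith [abs_nonneg (g x), sq_abs (g x)]
      have hsum := sq_sum_le_card_mul_sum_sq (s := Finset.range (q + 2))
        (f := fun i => |iteratedDerivWithin i u (Set.Ioo a b) x|)
      rw [Finset.card_range] at hsum
      have e2 : ∑ i ∈ Finset.range (q + 2), |iteratedDerivWithin i u (Set.Ioo a b) x| ^ 2
          = ∑ i ∈ Finset.range (q + 2), (iteratedDerivWithin i u (Set.Ioo a b) x) ^ 2 :=
        Finset.sum_congr rfl fun i _ => sq_abs _
      have e3 : ((q + 2 : ℕ) : ℝ) = (q + 2 : ℝ) := by push_cast; ring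
      rw [e2, e3] at hsum
      rw [Real.norm_eq_abs, abs_of_nonneg (sq_nonneg _)]
      calc g x ^ 2 ≤ (K * ∑ i ∈ Finset.range (q + 2),
            |iteratedDerivWithin i u (Set.Ioo a b) x|) ^ 2 := e1
        _ = K ^ 2 * (∑ i ∈ Finset.range (q + 2),
            |iteratedDerivWithin i u (Set.Ioo a b) x|) ^ 2 := by ring
        _ ≤ K ^ 2 * ((q + 2 : ℝ) *
            ∑ i ∈ Finset.range (q + 2), (iteratedDerivWithin i u (Set.Ioo a b) x) ^ 2) :=
          mul_le_mul_of_nonneg_left hsum (sq_nonneg K)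
  have huL2 : MemLp u 2 (volume.restrict (Set.Ioo a b)) := by
    have h0 := huint 0 (by omega)
    simp only [iteratedDerivWithin_zero] at h0
    exact (memLp_two_iff_integrable_sq
      (hu.continuousOn.aestronglyMeasurable measurableSet_Ioo)).mpr h0
  have hgL2 : MemLp g 2 (volume.restrict (Set.Ioo a b)) :=
    (memLp_two_iff_integrable_sq hgm).mpr hg2
  have hcellb : ∀ k : Fin N,
      IntegrableOn (fun x => (u x - Ph x) ^ 2) (Set.Ioo (xc k - dk k / 2) (xc k + dk k / 2)) ∧
      ∫ x in Set.Ioo (xc k - dk k / 2) (xc k + dk k / 2), (u x - Ph x) ^ 2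
        ≤ S ^ 2 * (dk k) ^ (2 * (q + 1)) *
          ∫ x in Set.Ioo (xc k - dk k / 2) (xc k + dk k / 2), g x ^ 2 := by
    intro k
    obtain ⟨c, hc⟩ := hPh k
    exact cell_bound q huθ hwdef hgdef hne hwcd hSb huL2 hgL2 (hdk k) (hsub k) c hc (horth k)
  -- the cells cover (a,b) up to measure zero
  have hUeq : (⋃ k : Fin N, Set.Ioo (xc k - dk k / 2) (xc k + dk k / 2)) =ᵐ[volume]
      Set.Ioo a b := by
    rw [MeasureTheory.ae_eq_set]
    constructor
    · have h : (⋃ k : Fin N, Set.Ioo (xc k - dk k / 2) (xc k + dk k / 2)) \ Set.Ioo a b = ∅ :=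
        Set.diff_eq_empty.mpr (Set.iUnion_subset fun k => hsub k)
      rw [h]; exact measure_empty
    · have hss : Set.Ioo a b \ (⋃ k : Fin N, Set.Ioo (xc k - dk k / 2) (xc k + dk k / 2))
          ⊆ ⋃ k : Fin N, ({xc k - dk k / 2} ∪ {xc k + dk k / 2} : Set ℝ) := by
        rintro x ⟨hx1, hx2⟩
        obtain ⟨k, hk⟩ := Set.mem_iUnion.mp (hcover hx1)
        refine Set.mem_iUnion.mpr ⟨k, ?_⟩
        have hnotin : x ∉ Set.Ioo (xc k - dk k / 2) (xc k + dk k / 2) := fun hmem =>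
          hx2 (Set.mem_iUnion.mpr ⟨k, hmem⟩)
        obtain ⟨h1, h2⟩ := hk
        simp only [Set.mem_union, Set.mem_singleton_iff]
        rcases eq_or_lt_of_le h1 with he | hlt
        · exact Or.inl he.symm
        rcases eq_or_lt_of_le h2 with he | hlt2
        · exact Or.inr he
        · exact absurd ⟨hlt, hlt2⟩ hnotin
      refine measure_mono_null hss (measure_iUnion_null fun k => ?_)
      exact measure_union_null (measure_singleton _) (measure_singleton _)
  have hsplit : ∀ f : ℝ → ℝ,
      (∀ k : Fin N, IntegrableOn f (Set.Ioo (xc k - dk k / 2) (xc k + dk k / 2))) →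
      ∫ x in Set.Ioo a b, f x
        = ∑ k : Fin N, ∫ x in Set.Ioo (xc k - dk k / 2) (xc k + dk k / 2), f x := by
    intro f hf
    rw [← setIntegral_congr_set hUeq]
    have hU : (⋃ k : Fin N, Set.Ioo (xc k - dk k / 2) (xc k + dk k / 2))
        = ⋃ k ∈ Finset.univ, Set.Ioo (xc k - dk k / 2) (xc k + dk k / 2) := by simp
    rw [hU, integral_biUnion_finset Finset.univ (fun k _ => measurableSet_Ioo)
      (fun k _ l _ hkl => hdisj k l hkl) (fun k _ => hf k)]
  have hsum1 := hsplit _ (fun k => (hcellb k).1)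
  have hsum2 := hsplit _ (fun k => hg2.mono_set (hsub k))
  have hGcellnn : ∀ k : Fin N,
      0 ≤ ∫ x in Set.Ioo (xc k - dk k / 2) (xc k + dk k / 2), g x ^ 2 :=
    fun k => integral_nonneg fun _ => sq_nonneg _
  have hsumle : ∫ x in Set.Ioo a b, (u x - Ph x) ^ 2
      ≤ S ^ 2 * (δp * Δx) ^ (2 * (q + 1)) * ∫ x in Set.Ioo a b, g x ^ 2 := by
    rw [hsum1, hsum2, Finset.mul_sum]
    apply Finset.sum_le_sum
    intro k _
    refine (hcellb k).2.trans ?_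
    refine mul_le_mul_of_nonneg_right ?_ (hGcellnn k)
    refine mul_le_mul_of_nonneg_left ?_ (sq_nonneg S)
    exact pow_le_pow_left₀ (hdk k).le (hquasi k).2 _
  have hGnn : 0 ≤ ∫ x in Set.Ioo a b, g x ^ 2 := integral_nonneg fun _ => sq_nonneg _
  have hLHS : Real.sqrt (∫ x in Set.Ioo a b, (u x - Ph x) ^ 2)
      ≤ S * (δp * Δx) ^ (q + 1) * Real.sqrt (∫ x in Set.Ioo a b, g x ^ 2) := by
    have h1 := Real.sqrt_le_sqrt hsumle
    have h2 : S ^ 2 * (δp * Δx) ^ (2 * (q + 1)) * ∫ x in Set.Ioo a b, g x ^ 2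
        = (S * (δp * Δx) ^ (q + 1)) ^ 2 * ∫ x in Set.Ioo a b, g x ^ 2 := by
      rw [show 2 * (q + 1) = (q + 1) * 2 from by ring, pow_mul]
      ring
    rw [h2, Real.sqrt_mul (sq_nonneg _), Real.sqrt_sq (by positivity)] at h1
    exact h1
  refine hLHS.trans ?_
  have hbase : 0 ≤ δp ^ (q + 1) * Real.sqrt (∫ x in Set.Ioo a b, g x ^ 2) * Δx ^ (q + 1) * S := by
    positivity
  have heq : S * (δp * Δx) ^ (q + 1) * Real.sqrt (∫ x in Set.Ioo a b, g x ^ 2)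
      = δp ^ (q + 1) * Real.sqrt (∫ x in Set.Ioo a b, g x ^ 2) * Δx ^ (q + 1) * S := by
    rw [mul_pow]
    ring
  rw [heq]
  calc δp ^ (q + 1) * Real.sqrt (∫ x in Set.Ioo a b, g x ^ 2) * Δx ^ (q + 1) * S
      ≤ (1 + X / m ^ 2) *
        (δp ^ (q + 1) * Real.sqrt (∫ x in Set.Ioo a b, g x ^ 2) * Δx ^ (q + 1) * S) :=
        le_mul_of_one_le_left hbase hX1
    _ = δp ^ (q + 1) * (1 + X / m ^ 2) * Real.sqrt (∫ x in Set.Ioo a b, g x ^ 2)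
        * Δx ^ (q + 1) * S := by ring
end

section
/- Let q ∈ ℕ, let Ω_k = (x_k − Δx_k/2, x_k + Δx_k/2) be a cell with center x_k and length Δx_k > 0, let u_θ be of class C^{q+1} and nonvanishing on the closure of Ω_k, and let u ∈ H^{q+1}(Ω_k). Define the prior Taylor operator T_θ(u)(x) = (Σ_{j=0}^q (u/u_θ)^{(j)}(x_k) (x − x_k)^j / j!) · u_θ(x). Then ‖u − T_θ(u)‖_{L∞(Ω_k)} ≤ (1/(q! √(2q+1))) |u/u_θ|_{H^{q+1}(Ω_k)} (Δx_k)^{q+1/2} ‖u_θ‖_{L∞(Ω_k)}. -/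
open MeasureTheory

private lemma mono_int_aux (q : ℕ) (c d : ℝ) (hcd : c ≤ d) (x : ℝ) (hx : x = c ∨ x = d) :
    ∫ t in Set.Ioc c d, (x - t) ^ (2 * q) = (d - c) ^ (2 * q + 1) / (2 * q + 1) := by
  rw [← intervalIntegral.integral_of_le hcd,
    intervalIntegral.integral_comp_sub_left (fun t => t ^ (2 * q)) x,
    integral_pow]
  rcases hx with rfl | rfl
  · have hodd : Odd (2 * q + 1) := ⟨q, by ring⟩
    have : (x - d) ^ (2 * q + 1) = -((d - x) ^ (2 * q + 1)) := by
      rw [← neg_sub, hodd.neg_pow]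
    rw [this]
    push_cast
    ring
  · push_cast
    ring

private lemma aux_bound (q : ℕ) (c d x Δx : ℝ) (hcd : c ≤ d) (hx : x = c ∨ x = d)
    (hdc : d - c ≤ Δx) (hΔx : 0 < Δx)
    (s : Set ℝ) (hsub : Set.Ioc c d ⊆ s) (G : ℝ → ℝ)
    (hGm : MemLp G 2 (volume.restrict s)) (hGsq : IntegrableOn (fun y => G y ^ 2) s) :
    |∫ t in Set.Ioc c d, ((Nat.factorial q : ℝ)⁻¹ * (x - t) ^ q) * G t| ≤
      1 / ((Nat.factorial q : ℝ) * Real.sqrt (2 * q + 1)) *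
        Real.sqrt (∫ y in s, G y ^ 2) * Δx ^ ((q : ℝ) + 1 / 2) := by
  have hq0 : (0:ℝ) < (Nat.factorial q : ℝ) := by exact_mod_cast (Nat.factorial_pos q)
  have hK : (0:ℝ) < Real.sqrt (2 * q + 1) := Real.sqrt_pos.mpr (by positivity)
  set S := Real.sqrt (∫ y in s, G y ^ 2) with hS
  have hS0 : 0 ≤ S := Real.sqrt_nonneg _
  -- step 1 : pull out absolute values
  have step1 : |∫ t in Set.Ioc c d, ((Nat.factorial q : ℝ)⁻¹ * (x - t) ^ q) * G t| ≤
      (Nat.factorial q : ℝ)⁻¹ * ∫ t in Set.Ioc c d, |x - t| ^ q * |G t| := by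
    have hn := norm_integral_le_integral_norm (μ := volume.restrict (Set.Ioc c d))
      (f := fun t => ((Nat.factorial q : ℝ)⁻¹ * (x - t) ^ q) * G t)
    simp only [Real.norm_eq_abs] at hn
    refine le_trans hn ?_
    rw [← MeasureTheory.integral_const_mul]
    apply le_of_eq
    congr 1
    funext t
    rw [abs_mul, abs_mul, abs_of_nonneg (inv_nonneg.mpr hq0.le), abs_pow]
    ring
  -- Hölder
  have hconj : Real.HolderConjugate 2 2 := Real.HolderConjugate.two_two
  have h2 : (ENNReal.ofReal (2:ℝ)) = 2 := by
    norm_num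
  have hf : MemLp (fun t => |x - t| ^ q) (ENNReal.ofReal (2:ℝ))
      (volume.restrict (Set.Ioc c d)) := by
    rw [h2]
    have hcont : Continuous (fun t : ℝ => |x - t| ^ q) :=
      ((continuous_const.sub continuous_id).abs.pow q)
    refine (memLp_two_iff_integrable_sq hcont.aestronglyMeasurable.restrict).mpr ?_
    exact (hcont.pow 2).integrableOn_Ioc
  have hg : MemLp (fun t => |G t|) (ENNReal.ofReal (2:ℝ))
      (volume.restrict (Set.Ioc c d)) := by
    rw [h2]
    have := (hGm.mono_measure (Measure.restrict_mono hsub le_rfl)).norm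
    simpa [Real.norm_eq_abs] using this
  have holder := MeasureTheory.integral_mul_le_Lp_mul_Lq_of_nonneg hconj
    (ae_of_all _ fun t => by positivity) (ae_of_all _ fun t => abs_nonneg _) hf hg
  -- simplify the rpow 2 to pow 2
  have hrpow2 : ∀ y : ℝ, y ^ (2:ℝ) = y ^ 2 := fun y => by
    rw [show (2:ℝ) = ((2:ℕ):ℝ) by norm_num, Real.rpow_natCast]
  simp_rw [hrpow2] at holder
  rw [← Real.sqrt_eq_rpow, ← Real.sqrt_eq_rpow] at holder
  -- compute the monomial integral
  have e1 : ∫ t in Set.Ioc c d, (|x - t| ^ q) ^ 2 = (d - c) ^ (2*q+1) / (2*q+1) := by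
    rw [← mono_int_aux q c d hcd x hx]
    congr 1
    funext t
    have hev : Even (q * 2) := ⟨q, by ring⟩
    rw [← pow_mul, hev.pow_abs, mul_comm q 2]
  have e2 : ∫ t in Set.Ioc c d, |G t| ^ 2 = ∫ t in Set.Ioc c d, G t ^ 2 := by
    congr 1; funext t; rw [sq_abs]
  rw [e1, e2] at holder
  -- monotonicity of the G-integral
  have e3 : ∫ t in Set.Ioc c d, G t ^ 2 ≤ ∫ y in s, G y ^ 2 :=
    setIntegral_mono_set hGsq (ae_of_all _ fun t => sq_nonneg _)
      (HasSubset.Subset.eventuallyLE hsub)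
  -- monotonicity of the monomial integral
  have e4 : Real.sqrt ((d - c) ^ (2*q+1) / (2*q+1)) ≤ Δx ^ ((q : ℝ) + 1/2) / Real.sqrt (2*q+1) := by
    have h5 : ((d - c):ℝ) ^ (2*q+1) ≤ Δx ^ (2*q+1) :=
      pow_le_pow_left₀ (sub_nonneg.mpr hcd) hdc _
    have h6 : Real.sqrt ((d - c) ^ (2*q+1) / (2*q+1)) ≤
        Real.sqrt (Δx ^ (2*q+1) / (2*q+1)) := by
      apply Real.sqrt_le_sqrt
      gcongr
    refine h6.trans (le_of_eq ?_)
    rw [Real.sqrt_div (by positivity) _]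
    congr 1
    rw [Real.sqrt_eq_rpow, ← Real.rpow_natCast Δx (2*q+1), ← Real.rpow_mul hΔx.le]
    congr 1
    push_cast
    ring
  calc |∫ t in Set.Ioc c d, ((Nat.factorial q : ℝ)⁻¹ * (x - t) ^ q) * G t|
      ≤ (Nat.factorial q : ℝ)⁻¹ * ∫ t in Set.Ioc c d, |x - t| ^ q * |G t| := step1
    _ ≤ (Nat.factorial q : ℝ)⁻¹ *
        (Real.sqrt ((d - c) ^ (2*q+1) / (2*q+1)) * Real.sqrt (∫ t in Set.Ioc c d, G t ^ 2)) :=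
        mul_le_mul_of_nonneg_left holder (by positivity)
    _ ≤ (Nat.factorial q : ℝ)⁻¹ * ((Δx ^ ((q : ℝ) + 1/2) / Real.sqrt (2*q+1)) * S) := by
        apply mul_le_mul_of_nonneg_left ?_ (by positivity)
        exact mul_le_mul e4 (Real.sqrt_le_sqrt e3) (Real.sqrt_nonneg _) (by positivity)
    _ = 1 / ((Nat.factorial q : ℝ) * Real.sqrt (2 * q + 1)) * S * Δx ^ ((q : ℝ) + 1/2) := by
        field_simp

/-- Prior Taylor remainder estimate (the `N₁` bound): on the cell
`Ω_k = (x_k - Δx_k/2, x_k + Δx_k/2)`, with `u_θ ∈ C^{q+1}` nonvanishing on the closed cell,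
`u ∈ H^{q+1}(Ω_k)`, and the prior Taylor operator
`T_θ(u)(x) = (∑_{j=0}^q (u/u_θ)^{(j)}(x_k)(x-x_k)^j/j!) u_θ(x)`, one has
`‖u - T_θ(u)‖_{L^∞(Ω_k)} ≤ (1/(q!√(2q+1))) |u/u_θ|_{H^{q+1}(Ω_k)} Δx_k^{q+1/2}
  ‖u_θ‖_{L^∞(Ω_k)}`. -/
theorem prior_taylor_remainder_bound (q : ℕ) (xk Δx : ℝ) (hΔx : 0 < Δx)
    (uθ : ℝ → ℝ)
    (huθ : ContDiffOn ℝ (q + 1 : ℕ) uθ (Set.Icc (xk - Δx / 2) (xk + Δx / 2)))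
    (huθ0 : ∀ x ∈ Set.Icc (xk - Δx / 2) (xk + Δx / 2), uθ x ≠ 0)
    (u : ℝ → ℝ)
    (hu : ContDiffOn ℝ (q + 1 : ℕ) u (Set.Ioo (xk - Δx / 2) (xk + Δx / 2)))
    (hint : ∀ k ≤ q + 1,
      IntegrableOn
        (fun x => (iteratedDerivWithin k u (Set.Ioo (xk - Δx / 2) (xk + Δx / 2)) x) ^ 2)
        (Set.Ioo (xk - Δx / 2) (xk + Δx / 2))) :
    ∀ x ∈ Set.Ioo (xk - Δx / 2) (xk + Δx / 2),
      |u x - (∑ j ∈ Finset.range (q + 1),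
          iteratedDerivWithin j (fun z => u z / uθ z)
              (Set.Ioo (xk - Δx / 2) (xk + Δx / 2)) xk /
            (Nat.factorial j : ℝ) * (x - xk) ^ j) * uθ x| ≤
        1 / ((Nat.factorial q : ℝ) * Real.sqrt (2 * q + 1)) *
          Real.sqrt (∫ y in Set.Ioo (xk - Δx / 2) (xk + Δx / 2),
            (iteratedDerivWithin (q + 1) (fun z => u z / uθ z)
                (Set.Ioo (xk - Δx / 2) (xk + Δx / 2)) y) ^ 2) *
          Δx ^ ((q : ℝ) + 1 / 2) *
          sSup ((fun y => |uθ y|) '' Set.Ioo (xk - Δx / 2) (xk + Δx / 2)) := by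
  intro x hx
  set a := xk - Δx / 2 with ha
  set b := xk + Δx / 2 with hb
  set s := Set.Ioo a b with hs
  have hab : a < b := by rw [ha, hb]; linarith
  have hxk : xk ∈ s := by constructor <;> [rw [ha]; rw [hb]] <;> linarith
  have hsub : s ⊆ Set.Icc a b := Set.Ioo_subset_Icc_self
  set w : ℝ → ℝ := fun z => u z / uθ z with hw
  have hws : ContDiffOn ℝ (q + 1 : ℕ) w s :=
    hu.div (huθ.mono hsub) (fun y hy => huθ0 y (hsub hy))
  have hsU : UniqueDiffOn ℝ s := isOpen_Ioo.uniqueDiffOn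
  set G := iteratedDerivWithin (q + 1) w s with hG
  have hGc : ContinuousOn G s :=
    hws.continuousOn_iteratedDerivWithin le_rfl hsU
  -- Taylor identity
  have hident : w x - taylorWithinEval w q s xk x =
      ∫ t in xk..x, ((Nat.factorial q : ℝ)⁻¹ * (x - t) ^ q) • G t := by
    have huIcc : Set.uIcc xk x ⊆ s := Set.ordConnected_Ioo.uIcc_subset hxk hx
    have hderiv : ∀ t ∈ Set.uIcc xk x,
        HasDerivAt (fun y => taylorWithinEval w q s y x)
          (((Nat.factorial q : ℝ)⁻¹ * (x - t) ^ q) • G t) t := by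
      intro t ht
      have hts : t ∈ s := huIcc ht
      have hdiff : DifferentiableWithinAt ℝ (iteratedDerivWithin q w s) s t := by
        have := hws.differentiableOn_iteratedDerivWithin
          (by exact_mod_cast Nat.lt_succ_self q) hsU
        exact this t hts
      exact (hasDerivWithinAt_taylorWithinEval hsU self_mem_nhdsWithin
        hts rfl.subset (hws.of_le (by exact_mod_cast Nat.le_succ q)) hdiff).hasDerivAt (isOpen_Ioo.mem_nhds hts)
    have hint' : IntervalIntegrable (fun t => ((Nat.factorial q : ℝ)⁻¹ * (x - t) ^ q) • G t)
        MeasureTheory.volume xk x := by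
      apply ContinuousOn.intervalIntegrable
      exact (continuousOn_const.mul
        ((continuousOn_const.sub continuousOn_id).pow q)).smul (hGc.mono huIcc)
    have := intervalIntegral.integral_eq_sub_of_hasDerivAt hderiv hint'
    rw [this, taylorWithinEval_self]
  -- membership of G in L²
  set g : ℝ → ℝ := fun z => (uθ z)⁻¹ with hg
  have hgIcc : ContDiffOn ℝ (q + 1 : ℕ) g (Set.Icc a b) := huθ.inv huθ0
  have hgs : ContDiffOn ℝ (q + 1 : ℕ) g s := hgIcc.mono hsub
  have hMex : ∀ i : ℕ, ∃ C : ℝ, 0 ≤ C ∧ ∀ y ∈ s, i ≤ q + 1 →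
      ‖iteratedFDerivWithin ℝ i g s y‖ ≤ C := by
    intro i
    by_cases hi : i ≤ q + 1
    · obtain ⟨C, hC⟩ := (isCompact_Icc (a := a) (b := b)).exists_bound_of_continuousOn
        (hgIcc.continuousOn_iteratedFDerivWithin (by exact_mod_cast hi) (uniqueDiffOn_Icc hab))
      refine ⟨max C 0, le_max_right _ _, fun y hy _ => ?_⟩
      have heq := iteratedFDerivWithin_inter_open (s := Set.Icc a b) (u := Set.Ioo a b)
        (f := g) (n := i) (𝕜 := ℝ) isOpen_Ioo hy
      rw [Set.inter_eq_self_of_subset_right Set.Ioo_subset_Icc_self] at heq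
      rw [show (s : Set ℝ) = Set.Ioo a b from rfl, heq]
      exact le_max_of_le_left (hC y (hsub hy))
    · exact ⟨0, le_rfl, fun y hy h => absurd h hi⟩
  choose M hM0 hM using hMex
  have husm : ∀ i : ℕ, i ≤ q + 1 →
      MemLp (iteratedDerivWithin i u s) 2 (volume.restrict s) := by
    intro i hi
    have hcont : ContinuousOn (iteratedDerivWithin i u s) s :=
      hu.continuousOn_iteratedDerivWithin (by exact_mod_cast hi) hsU
    exact (memLp_two_iff_integrable_sq
      (hcont.aestronglyMeasurable measurableSet_Ioo)).mpr (hint i hi)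
  set h : ℝ → ℝ := fun y => ∑ i ∈ Finset.range (q + 2),
    ((q + 1).choose i : ℝ) * M (q + 1 - i) * |iteratedDerivWithin i u s y| with hh
  have hhm : MemLp h 2 (volume.restrict s) := by
    rw [hh]
    apply memLp_finsetSum
    intro i hi
    have hi' : i ≤ q + 1 := Nat.lt_succ_iff.mp (Finset.mem_range.mp hi)
    have := ((husm i hi').norm.const_mul (((q + 1).choose i : ℝ) * M (q + 1 - i)))
    simpa [Real.norm_eq_abs, mul_comm] using this
  have hGbound : ∀ y ∈ s, ‖G y‖ ≤ h y := by
    intro y hy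
    have h1 : ‖G y‖ = ‖iteratedFDerivWithin ℝ (q + 1) w s y‖ := by
      rw [hG, norm_iteratedFDerivWithin_eq_norm_iteratedDerivWithin]
    have hwmul : w = fun z => u z * g z := by
      funext z; rw [hw, hg]; exact div_eq_mul_inv _ _
    rw [h1, hwmul]
    calc ‖iteratedFDerivWithin ℝ (q + 1) (fun z => u z * g z) s y‖
        ≤ ∑ i ∈ Finset.range (q + 2), ((q + 1).choose i : ℝ) *
            ‖iteratedFDerivWithin ℝ i u s y‖ * ‖iteratedFDerivWithin ℝ (q + 1 - i) g s y‖ :=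
          norm_iteratedFDerivWithin_mul_le hu hgs hsU hy le_rfl
      _ ≤ h y := by
          rw [hh]
          apply Finset.sum_le_sum
          intro i hi
          have hi' : i ≤ q + 1 := Nat.lt_succ_iff.mp (Finset.mem_range.mp hi)
          have e1 : ‖iteratedFDerivWithin ℝ i u s y‖ = |iteratedDerivWithin i u s y| := by
            rw [norm_iteratedFDerivWithin_eq_norm_iteratedDerivWithin, Real.norm_eq_abs]
          rw [e1]
          have := hM (q + 1 - i) y hy (by omega)
          calc ((q + 1).choose i : ℝ) * |iteratedDerivWithin i u s y| *
              ‖iteratedFDerivWithin ℝ (q + 1 - i) g s y‖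
              ≤ ((q + 1).choose i : ℝ) * |iteratedDerivWithin i u s y| * M (q + 1 - i) := by
                apply mul_le_mul_of_nonneg_left this
                positivity
            _ = ((q + 1).choose i : ℝ) * M (q + 1 - i) * |iteratedDerivWithin i u s y| := by ring
  have hGm : MemLp G 2 (volume.restrict s) := by
    apply MemLp.of_le hhm (hGc.aestronglyMeasurable measurableSet_Ioo)
    rw [ae_restrict_iff' measurableSet_Ioo]
    filter_upwards with y hy
    calc ‖G y‖ ≤ h y := hGbound y hy
      _ ≤ ‖h y‖ := le_abs_self _
  have hGsq : IntegrableOn (fun y => G y ^ 2) s := hGm.integrable_sq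
  -- the main estimate for the remainder of w
  have key : |w x - taylorWithinEval w q s xk x| ≤
      1 / ((Nat.factorial q : ℝ) * Real.sqrt (2 * q + 1)) *
        Real.sqrt (∫ y in s, G y ^ 2) * Δx ^ ((q : ℝ) + 1 / 2) := by
    rw [hident]
    simp only [smul_eq_mul]
    rcases le_total xk x with hle | hle
    · rw [intervalIntegral.integral_of_le hle]
      refine aux_bound q xk x x Δx hle (Or.inr rfl) ?_ hΔx s ?_ G hGm hGsq
      · have := hx.2; rw [hb] at this; linarith
      · intro t ht
        exact ⟨lt_trans hxk.1 ht.1, lt_of_le_of_lt ht.2 hx.2⟩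
    · rw [intervalIntegral.integral_symm, abs_neg, intervalIntegral.integral_of_le hle]
      refine aux_bound q x xk x Δx hle (Or.inl rfl) ?_ hΔx s ?_ G hGm hGsq
      · have := hx.1; rw [ha] at this; linarith
      · intro t ht
        exact ⟨lt_trans hx.1 ht.1, lt_of_le_of_lt ht.2 hxk.2⟩
  -- rewrite the Taylor polynomial
  have hT : (∑ j ∈ Finset.range (q + 1),
      iteratedDerivWithin j w s xk / (Nat.factorial j : ℝ) * (x - xk) ^ j) =
      taylorWithinEval w q s xk x := by
    rw [taylor_within_apply]
    apply Finset.sum_congr rfl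
    intro j _
    rw [smul_eq_mul]
    field_simp
  have hux : u x = w x * uθ x := by
    rw [hw]
    field_simp [huθ0 x (hsub hx)]
  -- bound on uθ
  obtain ⟨C, hC⟩ := (isCompact_Icc (a := a) (b := b)).exists_bound_of_continuousOn huθ.continuousOn
  have hbdd : BddAbove ((fun y => |uθ y|) '' s) := by
    refine ⟨C, ?_⟩
    rintro _ ⟨y, hy, rfl⟩
    simpa [Real.norm_eq_abs] using hC y (hsub hy)
  have huθx : |uθ x| ≤ sSup ((fun y => |uθ y|) '' s) :=
    le_csSup hbdd ⟨x, hx, rfl⟩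
  rw [hT, hux]
  calc |w x * uθ x - taylorWithinEval w q s xk x * uθ x|
      = |w x - taylorWithinEval w q s xk x| * |uθ x| := by
        rw [← abs_mul]; congr 1; ring
    _ ≤ (1 / ((Nat.factorial q : ℝ) * Real.sqrt (2 * q + 1)) *
          Real.sqrt (∫ y in s, G y ^ 2) * Δx ^ ((q : ℝ) + 1 / 2)) *
          sSup ((fun y => |uθ y|) '' s) := by
        apply mul_le_mul key huθx (abs_nonneg _)
        positivity
end

section
/- Let q ∈ ℕ, let Ω_k = (x_k − Δx_k/2, x_k + Δx_k/2) be a cell with center x_k and length Δx_k > 0, let m > 0, and let u_θ : Ω_k → ℝ be continuous with u_θ(x)² ≥ m² for all x ∈ Ω_k. Define the (q+1)×(q+1) symmetric matrices M and M* by M_{jℓ} = ∫_{Ω_k} ((x−x_k)^j/(j! Δx_k^j)) ((x−x_k)^ℓ/(ℓ! Δx_k^ℓ)) dx and M*_{jℓ} = ∫_{Ω_k} ((x−x_k)^j/(j! Δx_k^j)) ((x−x_k)^ℓ/(ℓ! Δx_k^ℓ)) u_θ(x)² dx, for 0 ≤ j, ℓ ≤ q. Then for every y ∈ ℝ^{q+1},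 yᵀ M* y ≥ m² yᵀ M y; consequently M and M* are positive definite, and the spectral (operator) norms of their inverses satisfy ‖(M*)⁻¹‖₂ ≤ (1/m²) ‖M⁻¹‖₂. -/
open MeasureTheory

/-- The spectral (ℓ²) operator norm of a real square matrix. -/
noncomputable def spectralNorm2 {n : ℕ} (A : Matrix (Fin n) (Fin n) ℝ) : ℝ :=
  ‖Matrix.toEuclideanCLM (𝕜 := ℝ) A‖

open Matrix in
open scoped RealInnerProductSpace in
lemma MMC.dot_le_spectral {n : ℕ} (A : Matrix (Fin n) (Fin n) ℝ) (x : Fin n → ℝ) :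
    x ⬝ᵥ (A *ᵥ x) ≤ spectralNorm2 A * (x ⬝ᵥ x) := by
  set v : EuclideanSpace ℝ (Fin n) := (WithLp.equiv 2 _).symm x with hv
  have h1 : x ⬝ᵥ (A *ᵥ x) = ⟪v, Matrix.toEuclideanCLM (𝕜 := ℝ) A v⟫ := by
    simp [PiLp.inner_apply, dotProduct]
    simp [hv, mul_comm]
  have h2 : x ⬝ᵥ x = ‖v‖ ^ 2 := by
    rw [← real_inner_self_eq_norm_sq]
    simp only [PiLp.inner_apply, dotProduct, RCLike.inner_apply, conj_trivial]
    rfl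
  rw [h1, h2]
  calc ⟪v, Matrix.toEuclideanCLM (𝕜 := ℝ) A v⟫ ≤ ‖v‖ * ‖Matrix.toEuclideanCLM (𝕜 := ℝ) A v‖ :=
        real_inner_le_norm _ _
    _ ≤ ‖v‖ * (‖Matrix.toEuclideanCLM (𝕜 := ℝ) A‖ * ‖v‖) := by
        gcongr
        exact ContinuousLinearMap.le_opNorm _ _
    _ = spectralNorm2 A * ‖v‖ ^ 2 := by rw [spectralNorm2]; ring

open Matrix in
lemma MMC.symm_dot {n : ℕ} {M : Matrix (Fin n) (Fin n) ℝ} (hs : ∀ i j, M i j = M j i)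
    (x w : Fin n → ℝ) : w ⬝ᵥ (M *ᵥ x) = x ⬝ᵥ (M *ᵥ w) := by
  simp only [dotProduct, Matrix.mulVec, Finset.mul_sum]
  rw [Finset.sum_comm]
  exact Finset.sum_congr rfl fun i _ => Finset.sum_congr rfl fun j _ => by rw [hs j i]; ring

open Matrix in
lemma MMC.posdef_coercive {n : ℕ} (M : Matrix (Fin n) (Fin n) ℝ) (hM : M.PosDef)
    (hs : ∀ i j, M i j = M j i) (x : Fin n → ℝ) :
    x ⬝ᵥ x ≤ spectralNorm2 M⁻¹ * (x ⬝ᵥ M *ᵥ x) := by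
  have hdet : IsUnit M.det := hM.det_pos.ne'.isUnit
  set w : Fin n → ℝ := M⁻¹ *ᵥ x with hw
  have hMw : M *ᵥ w = x := by
    rw [hw, Matrix.mulVec_mulVec, Matrix.mul_nonsing_inv _ hdet, Matrix.one_mulVec]
  have hsemi : ∀ z : Fin n → ℝ, 0 ≤ z ⬝ᵥ (M *ᵥ z) := by
    intro z
    have := hM.posSemidef.dotProduct_mulVec_nonneg z
    simpa using this
  have hquad : ∀ t : ℝ, 0 ≤ (w ⬝ᵥ M *ᵥ w) * (t * t) + (2 * (x ⬝ᵥ x)) * t + (x ⬝ᵥ M *ᵥ x) := by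
    intro t
    have h := hsemi (x + t • w)
    have hexp : (x + t • w) ⬝ᵥ (M *ᵥ (x + t • w)) =
        (w ⬝ᵥ M *ᵥ w) * (t * t) + (2 * (x ⬝ᵥ x)) * t + (x ⬝ᵥ M *ᵥ x) := by
      rw [Matrix.mulVec_add, Matrix.mulVec_smul]
      simp only [add_dotProduct, dotProduct_add, smul_dotProduct,
        dotProduct_smul, smul_eq_mul]
      have e1 : x ⬝ᵥ (M *ᵥ w) = x ⬝ᵥ x := by rw [hMw]
      have e2 : w ⬝ᵥ (M *ᵥ x) = x ⬝ᵥ x := by rw [MMC.symm_dot hs x w, hMw]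
      rw [e1, e2]
      ring
    linarith [hexp ▸ h]
  have hdisc := discrim_le_zero hquad
  rw [discrim] at hdisc
  have ha : w ⬝ᵥ (M *ᵥ w) = x ⬝ᵥ (M⁻¹ *ᵥ x) := by
    rw [hMw, dotProduct_comm]
  have hbound : x ⬝ᵥ (M⁻¹ *ᵥ x) ≤ spectralNorm2 M⁻¹ * (x ⬝ᵥ x) := MMC.dot_le_spectral _ _
  have hxx : 0 ≤ x ⬝ᵥ x := by
    simp only [dotProduct]
    exact Finset.sum_nonneg fun i _ => mul_self_nonneg _
  have hc : 0 ≤ x ⬝ᵥ M *ᵥ x := hsemi x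
  rcases eq_or_lt_of_le hxx with h0 | hpos
  · rw [← h0]
    exact mul_nonneg (by rw [spectralNorm2]; positivity) hc
  · nlinarith [hdisc, ha, hbound, hpos, hc]

open Matrix in
open scoped RealInnerProductSpace in
lemma MMC.spectral_inv_le {n : ℕ} (A : Matrix (Fin n) (Fin n) ℝ) (hA : A.PosDef) {c : ℝ}
    (hc : 0 < c) (h : ∀ x : Fin n → ℝ, c * (x ⬝ᵥ x) ≤ x ⬝ᵥ A *ᵥ x) :
    spectralNorm2 A⁻¹ ≤ 1 / c := by
  have hdet : IsUnit A.det := hA.det_pos.ne'.isUnit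
  rw [spectralNorm2]
  apply ContinuousLinearMap.opNorm_le_bound _ (by positivity)
  intro v
  set T := Matrix.toEuclideanCLM (𝕜 := ℝ) A⁻¹
  set xv : Fin n → ℝ := A⁻¹ *ᵥ (WithLp.equiv 2 _ v) with hxv
  set w : EuclideanSpace ℝ (Fin n) := T v with hwdef
  have hinner1 : ⟪w, w⟫ = xv ⬝ᵥ xv := by
    simp only [PiLp.inner_apply, dotProduct, RCLike.inner_apply, conj_trivial]; rfl
  have hinner2 : ⟪w, v⟫ = xv ⬝ᵥ (A *ᵥ xv) := by
    have : A *ᵥ xv = WithLp.equiv 2 _ v := by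
      rw [hxv, Matrix.mulVec_mulVec, Matrix.mul_nonsing_inv _ hdet, Matrix.one_mulVec]
    rw [this]
    simp only [PiLp.inner_apply, dotProduct, RCLike.inner_apply, conj_trivial]
    exact Finset.sum_congr rfl fun i _ => mul_comm _ _
  have hkey : c * ‖w‖ ^ 2 ≤ ‖w‖ * ‖v‖ := by
    calc c * ‖w‖ ^ 2 = c * ⟪w, w⟫ := by rw [real_inner_self_eq_norm_sq]
      _ = c * (xv ⬝ᵥ xv) := by rw [hinner1]
      _ ≤ xv ⬝ᵥ (A *ᵥ xv) := h xv
      _ = ⟪w, v⟫ := hinner2.symm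
      _ ≤ ‖w‖ * ‖v‖ := real_inner_le_norm _ _
  rcases eq_or_lt_of_le (norm_nonneg w) with h0 | hpos
  · rw [← h0]; positivity
  · rw [div_mul_eq_mul_div, le_div_iff₀ hc]
    nlinarith [hkey, hpos]

open Matrix in
lemma MMC.rep_quad (q : ℕ) (xk Δx : ℝ) (w : ℝ → ℝ)
    (hw : IntegrableOn w (Set.Ioo (xk - Δx / 2) (xk + Δx / 2)))
    (A : Matrix (Fin (q + 1)) (Fin (q + 1)) ℝ)
    (hA : ∀ j ℓ : Fin (q + 1), A j ℓ = ∫ x in Set.Ioo (xk - Δx / 2) (xk + Δx / 2),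
      ((x - xk) ^ (j : ℕ) / ((Nat.factorial (j : ℕ) : ℝ) * Δx ^ (j : ℕ))) *
        ((x - xk) ^ (ℓ : ℕ) / ((Nat.factorial (ℓ : ℕ) : ℝ) * Δx ^ (ℓ : ℕ))) * w x)
    (y : Fin (q + 1) → ℝ) :
    y ⬝ᵥ A *ᵥ y = ∫ x in Set.Ioo (xk - Δx / 2) (xk + Δx / 2),
      (∑ j : Fin (q + 1),
        y j * ((x - xk) ^ (j : ℕ) / ((Nat.factorial (j : ℕ) : ℝ) * Δx ^ (j : ℕ)))) ^ 2 * w x := by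
  set a := xk - Δx / 2
  set b := xk + Δx / 2
  set φ : Fin (q + 1) → ℝ → ℝ :=
    fun j x => (x - xk) ^ (j : ℕ) / ((Nat.factorial (j : ℕ) : ℝ) * Δx ^ (j : ℕ)) with hφ
  have hφcont : ∀ j, Continuous (φ j) := fun j =>
    ((continuous_id.sub continuous_const).pow _).div_const _
  have hφφint : ∀ j ℓ : Fin (q + 1), IntegrableOn (fun x => φ j x * φ ℓ x * w x) (Set.Ioo a b) := by
    intro j ℓ
    obtain ⟨C, hC⟩ := (isCompact_Icc (a := a) (b := b)).exists_bound_of_continuousOn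
      (((hφcont j).mul (hφcont ℓ)).continuousOn)
    exact hw.bdd_mul (((hφcont j).mul (hφcont ℓ)).aestronglyMeasurable)
      (by filter_upwards [ae_restrict_mem measurableSet_Ioo] with x hx using
        hC x (Set.Ioo_subset_Icc_self hx))
  calc y ⬝ᵥ A *ᵥ y = ∑ j, ∑ ℓ, y j * (A j ℓ * y ℓ) := by
        simp [dotProduct, Matrix.mulVec, Finset.mul_sum]
    _ = ∑ j, ∑ ℓ, ∫ x in Set.Ioo a b, (y j * y ℓ) * (φ j x * φ ℓ x * w x) := by
        refine Finset.sum_congr rfl fun j _ => Finset.sum_congr rfl fun ℓ _ => ?_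
        rw [MeasureTheory.integral_const_mul, ← hA j ℓ]
        ring
    _ = ∑ j, ∫ x in Set.Ioo a b, ∑ ℓ, (y j * y ℓ) * (φ j x * φ ℓ x * w x) := by
        refine Finset.sum_congr rfl fun j _ => ?_
        exact (MeasureTheory.integral_finset_sum _ fun ℓ _ => (hφφint j ℓ).const_mul _).symm
    _ = ∫ x in Set.Ioo a b, ∑ j, ∑ ℓ, (y j * y ℓ) * (φ j x * φ ℓ x * w x) := by
        exact (MeasureTheory.integral_finset_sum _ fun j _ =>
          MeasureTheory.integrable_finset_sum _ fun ℓ _ => (hφφint j ℓ).const_mul _).symm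
    _ = ∫ x in Set.Ioo a b, (∑ j : Fin (q + 1), y j * φ j x) ^ 2 * w x := by
        refine MeasureTheory.integral_congr_ae (Filter.Eventually.of_forall fun x => ?_)
        dsimp only
        rw [sq, Finset.sum_mul_sum, Finset.sum_mul]
        refine Finset.sum_congr rfl fun j _ => ?_
        rw [Finset.sum_mul]
        exact Finset.sum_congr rfl fun ℓ _ => by ring

lemma MMC.integral_sq_poly_pos (q : ℕ) (xk Δx : ℝ) (hΔx : 0 < Δx) (y : Fin (q + 1) → ℝ)
    (hy : y ≠ 0) :
    0 < ∫ x in Set.Ioo (xk - Δx / 2) (xk + Δx / 2),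
      (∑ j : Fin (q + 1),
        y j * ((x - xk) ^ (j : ℕ) / ((Nat.factorial (j : ℕ) : ℝ) * Δx ^ (j : ℕ)))) ^ 2 := by
  have hab : xk - Δx / 2 < xk + Δx / 2 := by linarith
  set c : Fin (q + 1) → ℝ :=
    fun j => y j / ((Nat.factorial (j : ℕ) : ℝ) * Δx ^ (j : ℕ)) with hc
  set p : Polynomial ℝ :=
    ∑ j : Fin (q + 1), Polynomial.C (c j) * (Polynomial.X - Polynomial.C xk) ^ (j : ℕ) with hp
  set f : ℝ → ℝ := fun x => (∑ j : Fin (q + 1),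
    y j * ((x - xk) ^ (j : ℕ) / ((Nat.factorial (j : ℕ) : ℝ) * Δx ^ (j : ℕ)))) ^ 2 with hf
  have heval : ∀ x, p.eval x ^ 2 = f x := by
    intro x
    rw [hp, Polynomial.eval_finset_sum, hf]
    congr 1
    refine Finset.sum_congr rfl fun j _ => ?_
    simp only [Polynomial.eval_mul, Polynomial.eval_pow, Polynomial.eval_sub, Polynomial.eval_X,
      Polynomial.eval_C, hc]
    ring
  have hfcont : Continuous f := by
    rw [hf]
    exact (continuous_finset_sum _ fun j _ =>
      continuous_const.mul (((continuous_id.sub continuous_const).pow _).div_const _)).pow 2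
  have hp0 : p ≠ 0 := by
    intro h0
    obtain ⟨j0, hj0⟩ : ∃ j, y j ≠ 0 := by
      by_contra h
      push_neg at h
      exact hy (funext h)
    have hcj0 : c j0 ≠ 0 := by
      rw [hc]
      exact div_ne_zero hj0 (by positivity)
    have hcomp : p.comp (Polynomial.X + Polynomial.C xk) =
        ∑ j : Fin (q + 1), (Polynomial.monomial (j : ℕ)) (c j) := by
      rw [hp, Polynomial.sum_comp]
      refine Finset.sum_congr rfl fun j _ => ?_
      simp only [Polynomial.mul_comp, Polynomial.pow_comp, Polynomial.sub_comp,
        Polynomial.X_comp, Polynomial.C_comp, add_sub_cancel_right,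
        Polynomial.C_mul_X_pow_eq_monomial]
    have h5 : (0 : Polynomial ℝ).coeff (j0 : ℕ) =
        (∑ j : Fin (q + 1), (Polynomial.monomial (j : ℕ)) (c j)).coeff (j0 : ℕ) := by
      rw [← hcomp, h0, Polynomial.zero_comp]
    rw [Polynomial.coeff_zero, Polynomial.finset_sum_coeff] at h5
    simp only [Polynomial.coeff_monomial, Fin.val_inj, Finset.sum_ite_eq', Finset.mem_univ,
      if_true] at h5
    exact hcj0 h5.symm
  have hfin : Set.Finite {x : ℝ | p.IsRoot x} := p.finite_setOf_isRoot hp0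
  have hfi : IntegrableOn f (Set.Ioo (xk - Δx / 2) (xk + Δx / 2)) :=
    (hfcont.integrableOn_Icc).mono_set Set.Ioo_subset_Icc_self
  rw [setIntegral_pos_iff_support_of_nonneg_ae
    (Filter.Eventually.of_forall fun x => by rw [hf]; positivity) hfi]
  have hsub : Set.Ioo (xk - Δx / 2) (xk + Δx / 2) ⊆
      (Function.support f ∩ Set.Ioo (xk - Δx / 2) (xk + Δx / 2)) ∪ {x : ℝ | p.IsRoot x} := by
    intro x hx
    by_cases hz : p.eval x = 0
    · exact Or.inr hz
    · refine Or.inl ⟨?_, hx⟩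
      rw [Function.mem_support, ← heval]
      exact pow_ne_zero _ hz
  have h1 : volume (Set.Ioo (xk - Δx / 2)  (xk + Δx / 2)) = ENNReal.ofReal Δx := by
    rw [Real.volume_Ioo]
    congr 1
    ring
  have h4 : (volume : Measure ℝ) {x : ℝ | p.IsRoot x} = 0 := hfin.measure_zero volume
  have h2 := (measure_mono (μ := volume) hsub).trans (measure_union_le _ _)
  rw [h1, h4, add_zero] at h2
  calc (0 : ENNReal) < ENNReal.ofReal Δx := by simp [hΔx]
    _ ≤ _ := h2

/-- Comparison of the scaled Taylor mass matrix `M` and the `u_θ²`-weighted mass matrix `M*`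
of the multiplicative enriched basis on the cell `Ω_k = (x_k - Δx_k/2, x_k + Δx_k/2)`:
if `u_θ` is continuous (and square-integrable) on `Ω_k` with `u_θ² ≥ m² > 0`, then
`yᵀ M* y ≥ m² yᵀ M y` for all `y`; consequently `M` and `M*` are positive definite and
`‖(M*)⁻¹‖₂ ≤ (1/m²) ‖M⁻¹‖₂`. -/
theorem mass_matrix_comparison (q : ℕ) (xk Δx : ℝ) (hΔx : 0 < Δx) (m : ℝ) (hm : 0 < m)
    (uθ : ℝ → ℝ)
    (hcont : ContinuousOn uθ (Set.Ioo (xk - Δx / 2) (xk + Δx / 2)))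
    (hint : IntegrableOn (fun x => uθ x ^ 2) (Set.Ioo (xk - Δx / 2) (xk + Δx / 2)))
    (hlow : ∀ x ∈ Set.Ioo (xk - Δx / 2) (xk + Δx / 2), m ^ 2 ≤ uθ x ^ 2)
    (M Mstar : Matrix (Fin (q + 1)) (Fin (q + 1)) ℝ)
    (hM : ∀ j ℓ : Fin (q + 1), M j ℓ =
      ∫ x in Set.Ioo (xk - Δx / 2) (xk + Δx / 2),
        ((x - xk) ^ (j : ℕ) / ((Nat.factorial (j : ℕ) : ℝ) * Δx ^ (j : ℕ))) *
          ((x - xk) ^ (ℓ : ℕ) / ((Nat.factorial (ℓ : ℕ) : ℝ) * Δx ^ (ℓ : ℕ))))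
    (hMstar : ∀ j ℓ : Fin (q + 1), Mstar j ℓ =
      ∫ x in Set.Ioo (xk - Δx / 2) (xk + Δx / 2),
        ((x - xk) ^ (j : ℕ) / ((Nat.factorial (j : ℕ) : ℝ) * Δx ^ (j : ℕ))) *
          ((x - xk) ^ (ℓ : ℕ) / ((Nat.factorial (ℓ : ℕ) : ℝ) * Δx ^ (ℓ : ℕ))) * uθ x ^ 2) :
    (∀ y : Fin (q + 1) → ℝ,
        m ^ 2 * dotProduct y (M.mulVec y) ≤ dotProduct y (Mstar.mulVec y)) ∧
      M.PosDef ∧ Mstar.PosDef ∧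
      spectralNorm2 (Mstar⁻¹) ≤ 1 / m ^ 2 * spectralNorm2 (M⁻¹) := by
  have hone : IntegrableOn (fun _ : ℝ => (1 : ℝ)) (Set.Ioo (xk - Δx / 2) (xk + Δx / 2)) :=
    integrableOn_const measure_Ioo_lt_top.ne
  have hMrep : ∀ y : Fin (q + 1) → ℝ, dotProduct y (M.mulVec y) =
      ∫ x in Set.Ioo (xk - Δx / 2) (xk + Δx / 2),
        (∑ j : Fin (q + 1),
          y j * ((x - xk) ^ (j : ℕ) / ((Nat.factorial (j : ℕ) : ℝ) * Δx ^ (j : ℕ)))) ^ 2 := by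
    intro y
    have h := MMC.rep_quad q xk Δx (fun _ => 1) hone M (fun j ℓ => by rw [hM j ℓ]; simp) y
    simpa using h
  have hMsrep : ∀ y : Fin (q + 1) → ℝ, dotProduct y (Mstar.mulVec y) =
      ∫ x in Set.Ioo (xk - Δx / 2) (xk + Δx / 2),
        (∑ j : Fin (q + 1),
          y j * ((x - xk) ^ (j : ℕ) / ((Nat.factorial (j : ℕ) : ℝ) * Δx ^ (j : ℕ)))) ^ 2 *
          uθ x ^ 2 :=
    fun y => MMC.rep_quad q xk Δx (fun x => uθ x ^ 2) hint Mstar (fun j ℓ => hMstar j ℓ) y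
  have hPcont : ∀ y : Fin (q + 1) → ℝ, Continuous (fun x : ℝ =>
      (∑ j : Fin (q + 1),
        y j * ((x - xk) ^ (j : ℕ) / ((Nat.factorial (j : ℕ) : ℝ) * Δx ^ (j : ℕ)))) ^ 2) :=
    fun y => (continuous_finset_sum _ fun j _ =>
      continuous_const.mul (((continuous_id.sub continuous_const).pow _).div_const _)).pow 2
  have hPsq_int : ∀ y : Fin (q + 1) → ℝ, IntegrableOn (fun x : ℝ =>
      (∑ j : Fin (q + 1),
        y j * ((x - xk) ^ (j : ℕ) / ((Nat.factorial (j : ℕ) : ℝ) * Δx ^ (j : ℕ)))) ^ 2)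
      (Set.Ioo (xk - Δx / 2) (xk + Δx / 2)) :=
    fun y => ((hPcont y).integrableOn_Icc).mono_set Set.Ioo_subset_Icc_self
  have hPsqu_int : ∀ y : Fin (q + 1) → ℝ, IntegrableOn (fun x : ℝ =>
      (∑ j : Fin (q + 1),
        y j * ((x - xk) ^ (j : ℕ) / ((Nat.factorial (j : ℕ) : ℝ) * Δx ^ (j : ℕ)))) ^ 2 *
        uθ x ^ 2) (Set.Ioo (xk - Δx / 2) (xk + Δx / 2)) := by
    intro y
    obtain ⟨C, hC⟩ := (isCompact_Icc (a := xk - Δx / 2) (b := xk + Δx / 2)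
      ).exists_bound_of_continuousOn ((hPcont y).continuousOn)
    exact hint.bdd_mul ((hPcont y).aestronglyMeasurable)
      (by filter_upwards [ae_restrict_mem measurableSet_Ioo] with x hx using
        hC x (Set.Ioo_subset_Icc_self hx))
  have part1 : ∀ y : Fin (q + 1) → ℝ,
      m ^ 2 * dotProduct y (M.mulVec y) ≤ dotProduct y (Mstar.mulVec y) := by
    intro y
    rw [hMrep y, hMsrep y, ← MeasureTheory.integral_const_mul]
    refine setIntegral_mono_on ((hPsq_int y).const_mul _) (hPsqu_int y) measurableSet_Ioo ?_
    intro x hx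
    have h1 := hlow x hx
    have h2 : (0 : ℝ) ≤ (∑ j : Fin (q + 1),
        y j * ((x - xk) ^ (j : ℕ) / ((Nat.factorial (j : ℕ) : ℝ) * Δx ^ (j : ℕ)))) ^ 2 :=
      sq_nonneg _
    nlinarith
  have hsymM : ∀ i j : Fin (q + 1), M i j = M j i := by
    intro i j
    rw [hM i j, hM j i]
    congr 1
    funext x
    ring
  have hsymMs : ∀ i j : Fin (q + 1), Mstar i j = Mstar j i := by
    intro i j
    rw [hMstar i j, hMstar j i]
    congr 1
    funext x
    ring
  have hMpos : M.PosDef := by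
    refine Matrix.posDef_iff_dotProduct_mulVec.mpr ⟨Matrix.ext fun i j => ?_, fun y hy => ?_⟩
    · rw [Matrix.conjTranspose_apply, star_trivial]
      exact hsymM j i
    · have hst : star y = y := funext fun i => star_trivial _
      rw [hst, hMrep y]
      exact MMC.integral_sq_poly_pos q xk Δx hΔx y hy
  have hMspos : Mstar.PosDef := by
    refine Matrix.posDef_iff_dotProduct_mulVec.mpr ⟨Matrix.ext fun i j => ?_, fun y hy => ?_⟩
    · rw [Matrix.conjTranspose_apply, star_trivial]
      exact hsymMs j i
    · have hst : star y = y := funext fun i => star_trivial _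
      rw [hst]
      have h0 : 0 < dotProduct y (M.mulVec y) := by
        rw [hMrep y]
        exact MMC.integral_sq_poly_pos q xk Δx hΔx y hy
      have h2 := part1 y
      nlinarith [mul_pos (pow_pos hm 2) h0]
  have hdetM : IsUnit M.det := hMpos.det_pos.ne'.isUnit
  set N := spectralNorm2 M⁻¹ with hN
  have hNpos : 0 < N := by
    rw [hN, spectralNorm2]
    set_option synthInstance.maxHeartbeats 1000000 in
    rw [norm_pos_iff]
    intro h
    have hinv0 : M⁻¹ = 0 := by
      set_option synthInstance.maxHeartbeats 1000000 in
      exact (Matrix.toEuclideanCLM (𝕜 := ℝ)).injective (h.trans (map_zero _).symm)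
    have h1 : (1 : Matrix (Fin (q + 1)) (Fin (q + 1)) ℝ) = 0 := by
      rw [← Matrix.nonsing_inv_mul M hdetM, hinv0, Matrix.zero_mul]
    have h2 := congrFun (congrFun h1 0) 0
    simp [Matrix.one_apply] at h2
  have hc : 0 < m ^ 2 / N := by positivity
  have hcoer := MMC.posdef_coercive M hMpos hsymM
  have hkey : ∀ x : Fin (q + 1) → ℝ,
      (m ^ 2 / N) * dotProduct x x ≤
        dotProduct x (Mstar.mulVec x) := by
    intro x
    have h1 : (m ^ 2 / N) * dotProduct x x ≤
        (m ^ 2 / N) * (N * dotProduct x (M.mulVec x)) :=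
      mul_le_mul_of_nonneg_left (hN ▸ hcoer x) (le_of_lt hc)
    have hN0 : N ≠ 0 := ne_of_gt hNpos
    have h2 : (m ^ 2 / N) * (N * dotProduct x (M.mulVec x)) =
        m ^ 2 * dotProduct x (M.mulVec x) := by
      calc (m ^ 2 / N) * (N * dotProduct x (M.mulVec x))
          = (N / N) * (m ^ 2 * dotProduct x (M.mulVec x)) := by ring
        _ = m ^ 2 * dotProduct x (M.mulVec x) := by rw [div_self hN0, one_mul]
    have h3 := part1 x
    linarith
  have hfin := MMC.spectral_inv_le Mstar hMspos hc hkey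
  refine ⟨part1, hMpos, hMspos, ?_⟩
  calc spectralNorm2 Mstar⁻¹ ≤ 1 / (m ^ 2 / N) := hfin
    _ = 1 / m ^ 2 * N := by
        rw [one_div_div]
        ring
end

section
/- Fix q ∈ ℕ. There exists a constant C > 0 depending only on q with the following property. Let Ω_k = (x_k − Δx_k/2, x_k + Δx_k/2) be a cell with center x_k and length Δx_k > 0, let u_θ be of class C^{q+1} and nonvanishing on the closure of Ω_k, and let u ∈ H^{q+1}(Ω_k). Then for every ℓ ∈ {0,…,q}, | ∫_{Ω_k} ( Σ_{j=0}^q (u/u_θ)^{(j)}(x_k) (x−x_k)^j/j! − u(x)/u_θ(x) ) · ((x−x_k)^ℓ/(ℓ! Δx_k^ℓ)) · u_θ(x)² dx | ≤ C |u/u_θ|_{H^{q+1}(Ω_k)} (Δx_k)^{q+3/2} ‖u_θ²‖_{L∞(Ω_k)}. -/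
open MeasureTheory
open scoped Nat

lemma l1_le_sqrt_l2 {s : Set ℝ} (hsm : MeasurableSet s) (hs : volume s ≠ ⊤) {h : ℝ → ℝ}
    (hmeas : AEStronglyMeasurable h (volume.restrict s))
    (hint : IntegrableOn (fun x => h x ^ 2) s) :
    ∫ x in s, |h x| ≤ Real.sqrt (∫ x in s, h x ^ 2) * Real.sqrt (volume s).toReal := by
  haveI : IsFiniteMeasure (volume.restrict s) :=
    ⟨by rwa [Measure.restrict_apply_univ, lt_top_iff_ne_top]⟩
  have h2 : MemLp h 2 (volume.restrict s) := (memLp_two_iff_integrable_sq hmeas).2 hint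
  have habs : MemLp (fun x => |h x|) (ENNReal.ofReal 2) (volume.restrict s) := by
    rw [show ENNReal.ofReal 2 = 2 by norm_num]
    exact h2.abs
  have hone : MemLp (fun _ : ℝ => (1 : ℝ)) (ENNReal.ofReal 2) (volume.restrict s) :=
    memLp_const 1
  have hpq : Real.HolderConjugate 2 2 := ⟨by norm_num, by norm_num, by norm_num⟩
  have key := integral_mul_le_Lp_mul_Lq_of_nonneg hpq
    (Filter.Eventually.of_forall fun x => abs_nonneg (h x))
    (Filter.Eventually.of_forall fun _ => zero_le_one) habs hone
  simp only [mul_one] at key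
  have e1 : (∫ x in s, |h x| ^ (2 : ℝ)) = ∫ x in s, h x ^ 2 := by
    apply integral_congr_ae
    filter_upwards with x
    rw [show (2 : ℝ) = ((2 : ℕ) : ℝ) by norm_num, Real.rpow_natCast, sq_abs]
  have e2 : (∫ (_ : ℝ) in s, (1 : ℝ) ^ (2 : ℝ)) = (volume s).toReal := by
    simp [Measure.real]
  rw [e1, e2] at key
  refine key.trans_eq ?_
  rw [Real.sqrt_eq_rpow, Real.sqrt_eq_rpow]

lemma taylor_sub_integral {n : ℕ} {f : ℝ → ℝ} {a b xk x : ℝ}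
    (hf : ContDiffOn ℝ (n + 1 : ℕ) f (Set.Ioo a b)) (hxk : xk ∈ Set.Ioo a b)
    (hx : x ∈ Set.Ioo a b) :
    f x - taylorWithinEval f n (Set.Ioo a b) xk x =
      ∫ t in xk..x, ((n ! : ℝ)⁻¹ * (x - t) ^ n) •
        iteratedDerivWithin (n + 1) f (Set.Ioo a b) t := by
  set I := Set.Ioo a b with hI
  have hIo : IsOpen I := isOpen_Ioo
  have hIu : UniqueDiffOn ℝ I := hIo.uniqueDiffOn
  have hsub : Set.uIcc xk x ⊆ I := (Set.ordConnected_Ioo).uIcc_subset hxk hx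
  have hdiff : DifferentiableOn ℝ (iteratedDerivWithin n f I) I :=
    hf.differentiableOn_iteratedDerivWithin (by exact_mod_cast Nat.lt_succ_self n) hIu
  have hderiv : ∀ t ∈ Set.uIcc xk x, HasDerivAt (fun y => taylorWithinEval f n I y x)
      (((n ! : ℝ)⁻¹ * (x - t) ^ n) • iteratedDerivWithin (n + 1) f I t) t := by
    intro t ht
    have htI : t ∈ I := hsub ht
    exact (hasDerivWithinAt_taylorWithinEval hIu self_mem_nhdsWithin htI
      subset_rfl (hf.of_le (by exact_mod_cast Nat.le_succ n)) (hdiff t htI)).hasDerivAt (hIo.mem_nhds htI)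
  have hcont : ContinuousOn (iteratedDerivWithin (n + 1) f I) I :=
    hf.continuousOn_iteratedDerivWithin le_rfl hIu
  have hint : IntervalIntegrable (fun t => ((n ! : ℝ)⁻¹ * (x - t) ^ n) •
      iteratedDerivWithin (n + 1) f I t) volume xk x :=
    (ContinuousOn.smul (continuousOn_const.mul
      ((continuousOn_const.sub continuousOn_id).pow n)) (hcont.mono hsub)).intervalIntegrable
  have h := intervalIntegral.integral_eq_sub_of_hasDerivAt hderiv hint
  rw [taylorWithinEval_self] at h
  rw [h]

/-- Bound on the components `Ξ_ℓ` of `M*δ - b*` in the analysis of the `L²` projection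
onto the multiplicative enriched basis `V_h^*`: there is `C > 0`, depending only on `q`,
such that on every cell `Ω_k = (x_k - Δx_k/2, x_k + Δx_k/2)`, for `u_θ ∈ C^{q+1}`
nonvanishing on the closed cell and `u ∈ H^{q+1}(Ω_k)`, for every `ℓ ∈ {0,…,q}`,
`|∫_{Ω_k} (∑_{j=0}^q (u/u_θ)^{(j)}(x_k)(x-x_k)^j/j! - u/u_θ) (x-x_k)^ℓ/(ℓ! Δx_k^ℓ) u_θ² dx|
 ≤ C |u/u_θ|_{H^{q+1}(Ω_k)} Δx_k^{q+3/2} ‖u_θ²‖_{L^∞(Ω_k)}`. -/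
theorem xi_component_bound (q : ℕ) :
    ∃ C : ℝ, 0 < C ∧
      ∀ (xk Δx : ℝ), 0 < Δx →
      ∀ uθ : ℝ → ℝ,
        ContDiffOn ℝ (q + 1 : ℕ) uθ (Set.Icc (xk - Δx / 2) (xk + Δx / 2)) →
        (∀ x ∈ Set.Icc (xk - Δx / 2) (xk + Δx / 2), uθ x ≠ 0) →
      ∀ u : ℝ → ℝ,
        ContDiffOn ℝ (q + 1 : ℕ) u (Set.Ioo (xk - Δx / 2) (xk + Δx / 2)) →
        (∀ k ≤ q + 1,
          IntegrableOn
            (fun x => (iteratedDerivWithin k u (Set.Ioo (xk - Δx / 2) (xk + Δx / 2)) x) ^ 2)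
            (Set.Ioo (xk - Δx / 2) (xk + Δx / 2))) →
      ∀ ℓ ≤ q,
        |∫ x in Set.Ioo (xk - Δx / 2) (xk + Δx / 2),
            ((∑ j ∈ Finset.range (q + 1),
                iteratedDerivWithin j (fun z => u z / uθ z)
                    (Set.Ioo (xk - Δx / 2) (xk + Δx / 2)) xk /
                  (Nat.factorial j : ℝ) * (x - xk) ^ j) -
              u x / uθ x) *
            ((x - xk) ^ ℓ / ((Nat.factorial ℓ : ℝ) * Δx ^ ℓ)) * uθ x ^ 2| ≤
          C * Real.sqrt (∫ y in Set.Ioo (xk - Δx / 2) (xk + Δx / 2),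
                (iteratedDerivWithin (q + 1) (fun z => u z / uθ z)
                    (Set.Ioo (xk - Δx / 2) (xk + Δx / 2)) y) ^ 2) *
            Δx ^ ((q : ℝ) + 3 / 2) *
            sSup ((fun y => |uθ y ^ 2|) '' Set.Ioo (xk - Δx / 2) (xk + Δx / 2)) := by
  refine ⟨1, one_pos, ?_⟩
  intro xk Δx hΔ uθ huθ hθ0 u hu hInt ℓ hℓ
  set a := xk - Δx / 2 with ha
  set b := xk + Δx / 2 with hb
  have hba : b - a = Δx := by rw [ha, hb]; ring
  have hab : a < b := by rw [ha, hb]; linarith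
  set I := Set.Ioo a b with hIdef
  set J := Set.Icc a b with hJdef
  have hIJ : I ⊆ J := Set.Ioo_subset_Icc_self
  have hxkI : xk ∈ I := by
    constructor
    · rw [ha]; linarith
    · rw [hb]; linarith
  have hIopen : IsOpen I := isOpen_Ioo
  have hIu : UniqueDiffOn ℝ I := hIopen.uniqueDiffOn
  have hImeas : MeasurableSet I := measurableSet_Ioo
  have hIvol : volume I = ENNReal.ofReal Δx := by
    rw [hIdef, Real.volume_Ioo, hba]
  set f := fun z => u z / uθ z with hf_def
  set h := iteratedDerivWithin (q + 1) f I with hh_def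
  set v := fun z => (uθ z)⁻¹ with hv_def
  have hθI : ∀ x ∈ I, uθ x ≠ 0 := fun x hx => hθ0 x (hIJ hx)
  have hvJ : ContDiffOn ℝ (q + 1 : ℕ) v J := huθ.inv hθ0
  have hvI : ContDiffOn ℝ (q + 1 : ℕ) v I := hvJ.mono hIJ
  have hfc : ContDiffOn ℝ (q + 1 : ℕ) f I := hu.div (huθ.mono hIJ) hθI
  have hcont : ContinuousOn h I := hfc.continuousOn_iteratedDerivWithin le_rfl hIu
  have hmeas : AEStronglyMeasurable h (volume.restrict I) :=
    hcont.aestronglyMeasurable hImeas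
  have hfeq : f = fun z => u z * v z := funext fun z => div_eq_mul_inv _ _
  -- bounds for derivatives of v
  have hvbd : ∀ j : ℕ, ∃ B : ℝ, ∀ x ∈ I, j ≤ q + 1 → ‖iteratedFDerivWithin ℝ j v I x‖ ≤ B := by
    intro j
    by_cases hj : j ≤ q + 1
    · obtain ⟨B, hB⟩ := isCompact_Icc.exists_bound_of_continuousOn
        (hvJ.continuousOn_iteratedDerivWithin (by exact_mod_cast hj) (uniqueDiffOn_Icc hab))
      refine ⟨B, fun x hx _ => ?_⟩
      have e1 : iteratedFDerivWithin ℝ j v I x = iteratedFDerivWithin ℝ j v J x :=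
        calc iteratedFDerivWithin ℝ j v I x
            = iteratedFDerivWithin ℝ j v (J ∩ I) x := by
              rw [Set.inter_eq_self_of_subset_right hIJ]
          _ = iteratedFDerivWithin ℝ j v J x := iteratedFDerivWithin_inter_open hIopen hx
      rw [e1, norm_iteratedFDerivWithin_eq_norm_iteratedDerivWithin]
      exact hB x (hIJ hx)
    · exact ⟨0, fun x hx hj' => absurd hj' hj⟩
  choose Bf hBf using hvbd
  set Bv : ℝ := max ((Finset.range (q + 2)).sup' ⟨0, by simp⟩ Bf) 0 with hBv
  have hBv0 : 0 ≤ Bv := le_max_right _ _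
  have hBf' : ∀ j ≤ q + 1, ∀ x ∈ I, ‖iteratedFDerivWithin ℝ j v I x‖ ≤ Bv := by
    intro j hj x hx
    refine le_max_of_le_left ((hBf j x hx hj).trans ?_)
    exact Finset.le_sup' Bf (Finset.mem_range.2 (by omega))
  set K : ℝ := 2 ^ (q + 1) * Bv with hK
  have hK0 : 0 ≤ K := by positivity
  have hchoose : ∀ i : ℕ, ((q + 1).choose i : ℝ) ≤ 2 ^ (q + 1) := by
    intro i
    have : (q + 1).choose i ≤ 2 ^ (q + 1) := by
      rcases le_or_gt i (q + 1) with hi | hi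
      · calc (q + 1).choose i ≤ ∑ m ∈ Finset.range (q + 2), (q + 1).choose m :=
              Finset.single_le_sum (fun m _ => Nat.zero_le _) (Finset.mem_range.2 (by omega))
          _ = 2 ^ (q + 1) := Nat.sum_range_choose (q + 1)
      · simp [Nat.choose_eq_zero_of_lt hi]
    exact_mod_cast this
  -- pointwise Leibniz bound on h
  have hpb : ∀ x ∈ I, |h x| ≤ K * ∑ i ∈ Finset.range (q + 2), |iteratedDerivWithin i u I x| := by
    intro x hx
    rw [hh_def, ← Real.norm_eq_abs, ← norm_iteratedFDerivWithin_eq_norm_iteratedDerivWithin, hfeq]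
    refine le_trans (norm_iteratedFDerivWithin_mul_le hu hvI hIu hx le_rfl) ?_
    rw [Finset.mul_sum]
    apply Finset.sum_le_sum
    intro i hi
    have hiq : i < q + 2 := Finset.mem_range.1 hi
    have h2 : ‖iteratedFDerivWithin ℝ (q + 1 - i) v I x‖ ≤ Bv := hBf' _ (by omega) x hx
    have h3 : ‖iteratedFDerivWithin ℝ i u I x‖ = |iteratedDerivWithin i u I x| := by
      rw [norm_iteratedFDerivWithin_eq_norm_iteratedDerivWithin, Real.norm_eq_abs]
    rw [h3]
    calc ((q + 1).choose i : ℝ) * |iteratedDerivWithin i u I x| *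
          ‖iteratedFDerivWithin ℝ (q + 1 - i) v I x‖
        ≤ 2 ^ (q + 1) * |iteratedDerivWithin i u I x| * Bv := by
          apply mul_le_mul (mul_le_mul_of_nonneg_right (hchoose i) (abs_nonneg _)) h2
            (norm_nonneg _) (by positivity)
      _ = K * |iteratedDerivWithin i u I x| := by rw [hK]; ring
  -- integrability of h²
  have hg_int : IntegrableOn
      (fun x => (K ^ 2 * (q + 2 : ℝ)) * ∑ i ∈ Finset.range (q + 2),
        (iteratedDerivWithin i u I x) ^ 2) I := by
    apply Integrable.const_mul
    apply integrable_finset_sum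
    intro i hi
    exact hInt i (by have := Finset.mem_range.1 hi; omega)
  have hint2 : IntegrableOn (fun t => h t ^ 2) I := by
    apply hg_int.mono' ((hcont.pow 2).aestronglyMeasurable hImeas)
    rw [ae_restrict_iff' hImeas]
    refine Filter.Eventually.of_forall fun x hx => ?_
    rw [Real.norm_eq_abs, abs_of_nonneg (sq_nonneg _)]
    have h5 : h x ^ 2 ≤ (K * ∑ i ∈ Finset.range (q + 2), |iteratedDerivWithin i u I x|) ^ 2 := by
      rw [← sq_abs]
      exact pow_le_pow_left₀ (abs_nonneg _) (hpb x hx) 2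
    refine h5.trans ?_
    rw [mul_pow]
    have h6 : (∑ i ∈ Finset.range (q + 2), |iteratedDerivWithin i u I x|) ^ 2
        ≤ (q + 2 : ℝ) * ∑ i ∈ Finset.range (q + 2), |iteratedDerivWithin i u I x| ^ 2 := by
      have := sq_sum_le_card_mul_sum_sq (s := Finset.range (q + 2))
        (f := fun i => |iteratedDerivWithin i u I x|)
      simpa using this
    calc K ^ 2 * (∑ i ∈ Finset.range (q + 2), |iteratedDerivWithin i u I x|) ^ 2
        ≤ K ^ 2 * ((q + 2 : ℝ) * ∑ i ∈ Finset.range (q + 2),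
            |iteratedDerivWithin i u I x| ^ 2) := by
          exact mul_le_mul_of_nonneg_left h6 (sq_nonneg K)
      _ = (K ^ 2 * (q + 2 : ℝ)) * ∑ i ∈ Finset.range (q + 2),
            (iteratedDerivWithin i u I x) ^ 2 := by
          simp only [sq_abs]; ring
  -- L² and L¹ facts
  set S := Real.sqrt (∫ y in I, h y ^ 2) with hS_def
  have hS0 : 0 ≤ S := Real.sqrt_nonneg _
  haveI : IsFiniteMeasure (volume.restrict I) := by
    constructor
    rw [Measure.restrict_apply_univ, hIvol]
    exact ENNReal.ofReal_lt_top
  have hint_h : IntegrableOn h I :=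
    ((memLp_two_iff_integrable_sq hmeas).2 hint2).integrable one_le_two
  have hL1' : IntegrableOn (fun t => |h t|) I := hint_h.abs
  have hL1 : ∫ t in I, |h t| ≤ S * Real.sqrt Δx := by
    have := l1_le_sqrt_l2 hImeas (by rw [hIvol]; exact ENNReal.ofReal_ne_top) hmeas hint2
    rwa [hIvol, ENNReal.toReal_ofReal hΔ.le] at this
  -- remainder bound
  have hrem : ∀ x ∈ I, |f x - taylorWithinEval f q I xk x| ≤ Δx ^ q * (S * Real.sqrt Δx) := by
    intro x hx
    have hsubIcc : Set.uIcc xk x ⊆ I := (Set.ordConnected_Ioo).uIcc_subset hxkI hx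
    have hsubIoc : Set.uIoc xk x ⊆ I := Set.uIoc_subset_uIcc.trans hsubIcc
    rw [taylor_sub_integral hfc hxkI hx, ← Real.norm_eq_abs]
    refine le_trans (intervalIntegral.norm_integral_le_integral_norm_uIoc) ?_
    have hFcont : ContinuousOn (fun t => ((q ! : ℝ)⁻¹ * (x - t) ^ q) •
        iteratedDerivWithin (q + 1) f I t) I :=
      (ContinuousOn.smul (continuousOn_const.mul
        ((continuousOn_const.sub continuousOn_id).pow q)) hcont)
    have int1 : IntegrableOn (fun t => ‖((q ! : ℝ)⁻¹ * (x - t) ^ q) •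
        iteratedDerivWithin (q + 1) f I t‖) (Set.uIoc xk x) :=
      (((hFcont.mono hsubIcc).norm).integrableOn_compact isCompact_uIcc).mono_set
        Set.uIoc_subset_uIcc
    have int2 : IntegrableOn (fun t => Δx ^ q * |h t|) (Set.uIoc xk x) :=
      (hL1'.const_mul (Δx ^ q)).mono_measure (Measure.restrict_mono hsubIoc le_rfl)
    have step1 : (∫ t in Set.uIoc xk x, ‖((q ! : ℝ)⁻¹ * (x - t) ^ q) •
        iteratedDerivWithin (q + 1) f I t‖) ≤ ∫ t in Set.uIoc xk x, Δx ^ q * |h t| := by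
      refine setIntegral_mono_on int1 int2 measurableSet_uIoc ?_
      intro t ht
      have htI : t ∈ I := hsubIoc ht
      rw [norm_smul, Real.norm_eq_abs, Real.norm_eq_abs]
      have hxt : |x - t| ≤ Δx := by
        rw [abs_sub_le_iff]
        constructor
        · have := hx.2; have := htI.1; rw [hb] at *; rw [ha] at *; linarith
        · have := hx.1; have := htI.2; rw [hb] at *; rw [ha] at *; linarith
      have hc : |(q ! : ℝ)⁻¹ * (x - t) ^ q| ≤ Δx ^ q := by
        rw [abs_mul, abs_pow]
        have e1 : |(q ! : ℝ)⁻¹| ≤ 1 := by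
          rw [abs_of_nonneg (by positivity)]
          apply inv_le_one_of_one_le₀
          exact_mod_cast q.factorial_pos
        have e2 : |x - t| ^ q ≤ Δx ^ q := pow_le_pow_left₀ (abs_nonneg _) hxt q
        calc |(q ! : ℝ)⁻¹| * |x - t| ^ q ≤ 1 * (Δx ^ q) :=
              mul_le_mul e1 e2 (by positivity) one_pos.le
          _ = Δx ^ q := one_mul _
      exact mul_le_mul_of_nonneg_right hc (abs_nonneg _)
    refine step1.trans ?_
    rw [integral_const_mul]
    have step3 : (∫ t in Set.uIoc xk x, |h t|) ≤ ∫ t in I, |h t| := by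
      apply setIntegral_mono_set hL1'
        (Filter.Eventually.of_forall fun t => abs_nonneg _)
        (HasSubset.Subset.eventuallyLE hsubIoc)
    calc Δx ^ q * ∫ t in Set.uIoc xk x, |h t|
        ≤ Δx ^ q * ∫ t in I, |h t| := mul_le_mul_of_nonneg_left step3 (by positivity)
      _ ≤ Δx ^ q * (S * Real.sqrt Δx) := mul_le_mul_of_nonneg_left hL1 (by positivity)
  -- sup bound
  set M := sSup ((fun y => |uθ y ^ 2|) '' I) with hM_def
  have hbdd : BddAbove ((fun y => |uθ y ^ 2|) '' I) := by
    have hc : ContinuousOn (fun y => |uθ y ^ 2|) J := (huθ.continuousOn.pow 2).abs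
    exact (isCompact_Icc.bddAbove_image hc).mono (Set.image_mono hIJ)
  have hMb : ∀ x ∈ I, |uθ x ^ 2| ≤ M := fun x hx => le_csSup hbdd ⟨x, hx, rfl⟩
  have hM0 : 0 ≤ M := le_trans (abs_nonneg _) (hMb xk hxkI)
  -- Taylor sum identification
  have hsum : ∀ x : ℝ, (∑ j ∈ Finset.range (q + 1),
      iteratedDerivWithin j f I xk / (j ! : ℝ) * (x - xk) ^ j) =
      taylorWithinEval f q I xk x := by
    intro x
    rw [taylor_within_apply]
    refine Finset.sum_congr rfl fun j _ => ?_
    rw [smul_eq_mul]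
    ring
  -- pointwise bound on the integrand
  have hpt : ∀ x ∈ I, ‖((∑ j ∈ Finset.range (q + 1),
      iteratedDerivWithin j f I xk / (j ! : ℝ) * (x - xk) ^ j) - u x / uθ x) *
      ((x - xk) ^ ℓ / ((ℓ ! : ℝ) * Δx ^ ℓ)) * uθ x ^ 2‖ ≤
      Δx ^ q * (S * Real.sqrt Δx) * M := by
    intro x hx
    have e0 : ((∑ j ∈ Finset.range (q + 1),
        iteratedDerivWithin j f I xk / (j ! : ℝ) * (x - xk) ^ j) - u x / uθ x)
        = taylorWithinEval f q I xk x - f x := by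
      rw [hsum x]
    rw [Real.norm_eq_abs, abs_mul, abs_mul, e0, abs_sub_comm]
    have hp1 : |(x - xk) ^ ℓ / ((ℓ ! : ℝ) * Δx ^ ℓ)| ≤ 1 := by
      rw [abs_div, abs_of_pos (by positivity : (0:ℝ) < (ℓ ! : ℝ) * Δx ^ ℓ)]
      rw [div_le_one (by positivity)]
      rw [abs_pow]
      have hxk2 : |x - xk| ≤ Δx := by
        rw [abs_sub_le_iff]
        constructor
        · have := hx.2; rw [hb] at this; linarith
        · have := hx.1; rw [ha] at this; linarith
      calc |x - xk| ^ ℓ ≤ Δx ^ ℓ := pow_le_pow_left₀ (abs_nonneg _) hxk2 ℓ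
        _ ≤ (ℓ ! : ℝ) * Δx ^ ℓ := le_mul_of_one_le_left (by positivity)
            (by exact_mod_cast ℓ.factorial_pos)
    calc |f x - taylorWithinEval f q I xk x| * |(x - xk) ^ ℓ / ((ℓ ! : ℝ) * Δx ^ ℓ)| *
          |uθ x ^ 2|
        ≤ (Δx ^ q * (S * Real.sqrt Δx)) * 1 * M := by
          apply mul_le_mul _ (hMb x hx) (abs_nonneg _) (by positivity)
          exact mul_le_mul (hrem x hx) hp1 (abs_nonneg _) (by positivity)
      _ = Δx ^ q * (S * Real.sqrt Δx) * M := by ring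
  -- final assembly
  have hfin := norm_setIntegral_le_of_norm_le_const
    (by rw [hIvol]; exact ENNReal.ofReal_lt_top) hpt
  rw [Real.norm_eq_abs] at hfin
  refine hfin.trans_eq ?_
  rw [Measure.real, hIvol, ENNReal.toReal_ofReal hΔ.le]
  have key : Δx ^ ((q : ℝ) + 3 / 2) = Δx ^ q * (Δx * Real.sqrt Δx) := by
    rw [show ((q : ℝ) + 3 / 2) = (q : ℝ) + 1 + 1 / 2 by ring]
    rw [Real.rpow_add hΔ, Real.rpow_add hΔ, Real.rpow_natCast, Real.rpow_one,
      ← Real.sqrt_eq_rpow]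
    ring
  rw [key]
  ring
end

section
/- Let g > 0, α > 0, Γ > 0 and r₀ > 0. Define on ℝ² the topography Z(x) = Γ exp(α (r₀² − ‖x‖²)), the water height h_eq(x) = 2 − Z(x) − (α/(8g)) Z(x)⁴, the profile u_eq(x) = α Z(x)², and the discharge Q_eq(x) = −x^⊥ h_eq(x) u_eq(x), where x^⊥ = (−x₂, x₁). Assume the parameters are such that h_eq(x) > 0 for all x ∈ ℝ². Then (h_eq, Q_eq) is a steady solution of the two-dimensional shallow water equations: ∇·Q_eq = 0 and, componentwise for i = 1, 2, Σ_{j=1}^2 ∂_{x_j} ( (Q_eq)_i (Q_eq)_j / h_eq ) + ∂_{x_i} ( (g/2) h_eq² ) = −g h_eq ∂_{x_i} Z everywhere on ℝ². -/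
/-- The Gaussian-bump topography `Z(x) = Γ exp(α(r₀² - ‖x‖²))` on `ℝ²`. -/
noncomputable def swTopography (α Γ r₀ : ℝ) (x : ℝ × ℝ) : ℝ :=
  Γ * Real.exp (α * (r₀ ^ 2 - (x.1 ^ 2 + x.2 ^ 2)))

/-- The steady water height `h_eq = 2 - Z - (α/(8g)) Z⁴`. -/
noncomputable def swSteadyHeight (g α Γ r₀ : ℝ) (x : ℝ × ℝ) : ℝ :=
  2 - swTopography α Γ r₀ x - α / (8 * g) * swTopography α Γ r₀ x ^ 4

/-- The steady angular velocity profile `u_eq = α Z²`. -/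
noncomputable def swSteadyProfile (α Γ r₀ : ℝ) (x : ℝ × ℝ) : ℝ :=
  α * swTopography α Γ r₀ x ^ 2

/-- The steady discharge `Q_eq = -x^⊥ h_eq u_eq` with `x^⊥ = (-x₂, x₁)`, i.e.
`Q_eq = (x₂ h_eq u_eq, -x₁ h_eq u_eq)`. -/
noncomputable def swSteadyDischarge (g α Γ r₀ : ℝ) (x : ℝ × ℝ) : ℝ × ℝ :=
  (x.2 * swSteadyHeight g α Γ r₀ x * swSteadyProfile α Γ r₀ x,
    -x.1 * swSteadyHeight g α Γ r₀ x * swSteadyProfile α Γ r₀ x)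

lemma swZ1 (α Γ r₀ a b : ℝ) :
    HasDerivAt (fun t => swTopography α Γ r₀ (t, b))
      (-(2 * α * a) * swTopography α Γ r₀ (a, b)) a := by
  have h1 : HasDerivAt (fun t : ℝ => α * (r₀ ^ 2 - (t ^ 2 + b ^ 2))) (α * (-(2 * a))) a := by
    have := (((hasDerivAt_pow 2 a).add_const (b ^ 2)).const_sub (r₀ ^ 2)).const_mul α
    simpa using this
  have h2 := (h1.exp).const_mul Γ
  refine h2.congr_deriv ?_
  simp [swTopography]; ring

lemma swZ2 (α Γ r₀ a b : ℝ) :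
    HasDerivAt (fun t => swTopography α Γ r₀ (a, t))
      (-(2 * α * b) * swTopography α Γ r₀ (a, b)) b := by
  have h1 : HasDerivAt (fun t : ℝ => α * (r₀ ^ 2 - (a ^ 2 + t ^ 2))) (α * (-(2 * b))) b := by
    have := (((hasDerivAt_pow 2 b).const_add (a ^ 2)).const_sub (r₀ ^ 2)).const_mul α
    simpa using this
  have h2 := (h1.exp).const_mul Γ
  refine h2.congr_deriv ?_
  simp [swTopography]; ring

lemma swH1 (g α Γ r₀ a b : ℝ) :
    HasDerivAt (fun t => swSteadyHeight g α Γ r₀ (t, b))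
      ((-1 - α / (8 * g) * (4 * swTopography α Γ r₀ (a, b) ^ 3)) *
        (-(2 * α * a) * swTopography α Γ r₀ (a, b))) a := by
  have hZ := swZ1 α Γ r₀ a b
  exact ((hZ.const_sub 2).sub ((hZ.pow 4).const_mul (α / (8 * g)))).congr_deriv (by ring)

lemma swH2 (g α Γ r₀ a b : ℝ) :
    HasDerivAt (fun t => swSteadyHeight g α Γ r₀ (a, t))
      ((-1 - α / (8 * g) * (4 * swTopography α Γ r₀ (a, b) ^ 3)) *
        (-(2 * α * b) * swTopography α Γ r₀ (a, b))) b := by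
  have hZ := swZ2 α Γ r₀ a b
  exact ((hZ.const_sub 2).sub ((hZ.pow 4).const_mul (α / (8 * g)))).congr_deriv (by ring)

lemma swU1 (α Γ r₀ a b : ℝ) :
    HasDerivAt (fun t => swSteadyProfile α Γ r₀ (t, b))
      (α * (2 * swTopography α Γ r₀ (a, b) * (-(2 * α * a) * swTopography α Γ r₀ (a, b)))) a := by
  have hZ := swZ1 α Γ r₀ a b
  exact ((hZ.pow 2).const_mul α).congr_deriv (by ring)

lemma swU2 (α Γ r₀ a b : ℝ) :
    HasDerivAt (fun t => swSteadyProfile α Γ r₀ (a, t))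
      (α * (2 * swTopography α Γ r₀ (a, b) * (-(2 * α * b) * swTopography α Γ r₀ (a, b)))) b := by
  have hZ := swZ2 α Γ r₀ a b
  exact ((hZ.pow 2).const_mul α).congr_deriv (by ring)

set_option maxHeartbeats 3200000 in
/-- `(h_eq, Q_eq)` is a steady solution of the two-dimensional shallow water equations:
assuming `h_eq > 0` everywhere, the discharge is divergence-free, and the momentum balance
`∑_j ∂_{x_j}((Q_eq)_i (Q_eq)_j / h_eq) + ∂_{x_i}((g/2) h_eq²) = -g h_eq ∂_{x_i} Z` holds
for `i = 1, 2` everywhere on `ℝ²`. -/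
theorem sw2d_steady_solution (g α Γ r₀ : ℝ)
    (hg : 0 < g) (hα : 0 < α) (hΓ : 0 < Γ) (hr₀ : 0 < r₀)
    (hpos : ∀ x : ℝ × ℝ, 0 < swSteadyHeight g α Γ r₀ x) :
    ∀ x : ℝ × ℝ,
      (deriv (fun t => (swSteadyDischarge g α Γ r₀ (t, x.2)).1) x.1 +
          deriv (fun t => (swSteadyDischarge g α Γ r₀ (x.1, t)).2) x.2 = 0) ∧
      (deriv (fun t => (swSteadyDischarge g α Γ r₀ (t, x.2)).1 *
            (swSteadyDischarge g α Γ r₀ (t, x.2)).1 / swSteadyHeight g α Γ r₀ (t, x.2)) x.1 +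
          deriv (fun t => (swSteadyDischarge g α Γ r₀ (x.1, t)).1 *
            (swSteadyDischarge g α Γ r₀ (x.1, t)).2 / swSteadyHeight g α Γ r₀ (x.1, t)) x.2 +
          deriv (fun t => g / 2 * swSteadyHeight g α Γ r₀ (t, x.2) ^ 2) x.1 =
        -(g * swSteadyHeight g α Γ r₀ x) *
          deriv (fun t => swTopography α Γ r₀ (t, x.2)) x.1) ∧
      (deriv (fun t => (swSteadyDischarge g α Γ r₀ (t, x.2)).2 *
            (swSteadyDischarge g α Γ r₀ (t, x.2)).1 / swSteadyHeight g α Γ r₀ (t, x.2)) x.1 +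
          deriv (fun t => (swSteadyDischarge g α Γ r₀ (x.1, t)).2 *
            (swSteadyDischarge g α Γ r₀ (x.1, t)).2 / swSteadyHeight g α Γ r₀ (x.1, t)) x.2 +
          deriv (fun t => g / 2 * swSteadyHeight g α Γ r₀ (x.1, t) ^ 2) x.2 =
        -(g * swSteadyHeight g α Γ r₀ x) *
          deriv (fun t => swTopography α Γ r₀ (x.1, t)) x.2) := by
  rintro ⟨a, b⟩
  have hne : swSteadyHeight g α Γ r₀ (a, b) ≠ 0 := (hpos (a, b)).ne'
  have hZ1 := swZ1 α Γ r₀ a b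
  have hZ2 := swZ2 α Γ r₀ a b
  have hh1 := swH1 g α Γ r₀ a b
  have hh2 := swH2 g α Γ r₀ a b
  have hu1 := swU1 α Γ r₀ a b
  have hu2 := swU2 α Γ r₀ a b
  -- discharge components along each direction
  have dQ11 : HasDerivAt (fun t => (swSteadyDischarge g α Γ r₀ (t, b)).1)
      ((b * ((-1 - α / (8 * g) * (4 * swTopography α Γ r₀ (a, b) ^ 3)) *
          (-(2 * α * a) * swTopography α Γ r₀ (a, b)))) * swSteadyProfile α Γ r₀ (a, b) +
        b * swSteadyHeight g α Γ r₀ (a, b) *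
          (α * (2 * swTopography α Γ r₀ (a, b) * (-(2 * α * a) * swTopography α Γ r₀ (a, b))))) a := by
    simpa [swSteadyDischarge, Pi.mul_def, Pi.neg_def] using (hh1.const_mul b).mul hu1
  have dQ12 : HasDerivAt (fun t => (swSteadyDischarge g α Γ r₀ (a, t)).1)
      ((1 * swSteadyHeight g α Γ r₀ (a, b) + b *
          ((-1 - α / (8 * g) * (4 * swTopography α Γ r₀ (a, b) ^ 3)) *
            (-(2 * α * b) * swTopography α Γ r₀ (a, b)))) * swSteadyProfile α Γ r₀ (a, b) +
        b * swSteadyHeight g α Γ r₀ (a, b) *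
          (α * (2 * swTopography α Γ r₀ (a, b) * (-(2 * α * b) * swTopography α Γ r₀ (a, b))))) b := by
    simpa [swSteadyDischarge, Pi.mul_def, Pi.neg_def] using ((hasDerivAt_id b).mul hh2).mul hu2
  have dQ21 : HasDerivAt (fun t => (swSteadyDischarge g α Γ r₀ (t, b)).2)
      ((-1 * swSteadyHeight g α Γ r₀ (a, b) + -a *
          ((-1 - α / (8 * g) * (4 * swTopography α Γ r₀ (a, b) ^ 3)) *
            (-(2 * α * a) * swTopography α Γ r₀ (a, b)))) * swSteadyProfile α Γ r₀ (a, b) +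
        -a * swSteadyHeight g α Γ r₀ (a, b) *
          (α * (2 * swTopography α Γ r₀ (a, b) * (-(2 * α * a) * swTopography α Γ r₀ (a, b))))) a := by
    simpa [swSteadyDischarge, Pi.mul_def, Pi.neg_def] using (((hasDerivAt_id a).neg).mul hh1).mul hu1
  have dQ22 : HasDerivAt (fun t => (swSteadyDischarge g α Γ r₀ (a, t)).2)
      ((-a * ((-1 - α / (8 * g) * (4 * swTopography α Γ r₀ (a, b) ^ 3)) *
          (-(2 * α * b) * swTopography α Γ r₀ (a, b)))) * swSteadyProfile α Γ r₀ (a, b) +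
        -a * swSteadyHeight g α Γ r₀ (a, b) *
          (α * (2 * swTopography α Γ r₀ (a, b) * (-(2 * α * b) * swTopography α Γ r₀ (a, b))))) b := by
    simpa [swSteadyDischarge, Pi.mul_def, Pi.neg_def] using (hh2.const_mul (-a)).mul hu2
  have dP1 := ((hh1.pow 2).const_mul (g / 2))
  have dP2 := ((hh2.pow 2).const_mul (g / 2))
  have dA11 := (dQ11.mul dQ11).div hh1 hne
  have dA12 := (dQ12.mul dQ22).div hh2 hne
  have dA21 := (dQ21.mul dQ11).div hh1 hne
  have dA22 := (dQ22.mul dQ22).div hh2 hne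
  simp only [Pi.mul_def, Pi.div_def, Pi.pow_apply] at dA11 dA12 dA21 dA22 dP1 dP2
  set z := swTopography α Γ r₀ (a, b) with hz
  set H := swSteadyHeight g α Γ r₀ (a, b) with hH
  set U := swSteadyProfile α Γ r₀ (a, b) with hU
  have hq1 : (swSteadyDischarge g α Γ r₀ (a, b)).1 = b * H * U := rfl
  have hq2 : (swSteadyDischarge g α Γ r₀ (a, b)).2 = -a * H * U := rfl
  have hU' : U = α * z ^ 2 := rfl
  have hH' : H = 2 - z - α / (8 * g) * z ^ 4 := rfl
  clear_value z H U
  refine ⟨?_, ?_, ?_⟩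
  · rw [dQ11.deriv, dQ22.deriv]
    ring
  · rw [dA11.deriv, dA12.deriv, dP1.deriv, hZ1.deriv, hq1, hq2, hU']
    field_simp [hne]
    rw [hH']
    field_simp [hg.ne']
    linear_combination a * (32 * z * g ^ 2 - 16 * z ^ 2 * g ^ 2 + 16 * z ^ 4 * α * g - 10 * z ^ 5 * α * g - z ^ 8 * α ^ 2) * mul_inv_cancel₀ hg.ne'
  · rw [dA21.deriv, dA22.deriv, dP2.deriv, hZ2.deriv, hq1, hq2, hU']
    field_simp [hne]
    rw [hH']
    field_simp [hg.ne']
    linear_combination b * (32 * z * g ^ 2 - 16 * z ^ 2 * g ^ 2 + 16 * z ^ 4 * α * g - 10 * z ^ 5 * α * g - z ^ 8 * α ^ 2) * mul_inv_cancel₀ hg.ne'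
end
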